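/- arXiv:1104.4335 — 11 statements merged into one kernel-verified Lean document; each statement's English description precedes it below -/
import Mathlib

section
/- Let Γ be an additive commutative group, P ⊆ Γ an additive submonoid, and d, r : Γ → ℝ, v : Γ → ℤ additive group homomorphisms such that for every nonzero β ∈ P: r(β) ≥ 0, v(β) ≥ 0, and if r(β) = 0 then d(β) > 0 and v(β) = 0. Let α ∈ P with v(α) = 1, and suppose the set W = {β ∈ P : β ≠ 0 and α − β ∈ P and α − β ≠ 0} is finite. Then the set of non-α-generic parameters {c ∈ ℝ : there exists β ∈ W with (d(β) + c·v(β))·r(α) = (d(α) + c)·r(β)} is finite. -/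
/-- For a class `α` in the positive cone `P` with framing rank `v(α) = 1`, if there are only
finitely many classes `β` with `0 < β < α`, then only finitely many parameters `c ∈ ℝ` fail to
be `α`-generic, i.e. satisfy the wall equation `μ_{Z_c}(β) = μ_{Z_c}(α)` (in cross-multiplied
form) for some such `β`. -/
theorem stmt_1 {Γ : Type*} [AddCommGroup Γ] (P : AddSubmonoid Γ)
    (d r : Γ →+ ℝ) (v : Γ →+ ℤ)
    (hpos : ∀ β ∈ P, β ≠ (0 : Γ) →
      0 ≤ r β ∧ 0 ≤ v β ∧ (r β = 0 → 0 < d β ∧ v β = 0))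
    (α : Γ) (hα : α ∈ P) (hvα : v α = 1)
    (W : Set Γ) (hW : W = {β : Γ | β ∈ P ∧ β ≠ 0 ∧ α - β ∈ P ∧ α - β ≠ 0})
    (hWfin : W.Finite) :
    {c : ℝ | ∃ β ∈ W, (d β + c * (v β : ℝ)) * r α = (d α + c) * r β}.Finite := by
  have hα0 : α ≠ 0 := by
    intro h
    rw [h, map_zero] at hvα
    exact one_ne_zero hvα.symm
  obtain ⟨hrα, hvαnn, -⟩ := hpos α hα hα0
  have key : ∀ β ∈ W,
      {c : ℝ | (d β + c * (v β : ℝ)) * r α = (d α + c) * r β}.Finite := by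
    intro β hβ
    rw [hW] at hβ
    obtain ⟨hβP, hβ0, hγP, hγ0⟩ := hβ
    obtain ⟨hrβ, hvβ, hβz⟩ := hpos β hβP hβ0
    obtain ⟨hrγ, hvγ, hγz⟩ := hpos _ hγP hγ0
    have hrsub : r (α - β) = r α - r β := by simp
    have hdsub : d (α - β) = d α - d β := by simp
    have hvsub : v (α - β) = 1 - v β := by simp [hvα]
    by_cases h : r β = 0
    · obtain ⟨hdβ, hvβ0⟩ := hβz h
      have hrαne : r α ≠ 0 := by
        intro h0
        have hz : r (α - β) = 0 := by rw [hrsub, h0, h]; ring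
        have := (hγz hz).2
        rw [hvsub, hvβ0] at this
        omega
      have : {c : ℝ | (d β + c * (v β : ℝ)) * r α = (d α + c) * r β} = ∅ := by
        ext c
        simp only [Set.mem_setOf_eq, Set.mem_empty_iff_false, iff_false]
        rw [h, hvβ0]
        push_cast
        intro hc
        have : d β * r α = 0 := by linarith [hc]
        rcases mul_eq_zero.mp this with h1 | h1
        · exact hdβ.ne' h1
        · exact hrαne h1
      rw [this]; exact Set.finite_empty
    · apply Set.Subsingleton.finite
      intro c1 hc1 c2 hc2
      simp only [Set.mem_setOf_eq] at hc1 hc2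
      by_contra hne
      have hA : (v β : ℝ) * r α - r β = 0 := by
        have : (c1 - c2) * ((v β : ℝ) * r α - r β) = 0 := by ring_nf; nlinarith [hc1, hc2]
        rcases mul_eq_zero.mp this with h1 | h1
        · exact absurd (sub_eq_zero.mp h1) hne
        · exact h1
      have hrβpos : 0 < r β := lt_of_le_of_ne hrβ (Ne.symm h)
      have hvβne : v β ≠ 0 := by
        intro hv0
        rw [hv0] at hA; push_cast at hA; linarith
      have hvβ1 : v β = 1 := by
        have hvle : v β ≤ 1 := by
          have := hvγ; rw [hvsub] at this; omega
        omega
      have hrαβ : r α = r β := by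
        rw [hvβ1] at hA; push_cast at hA; linarith
      have hrγ0 : r (α - β) = 0 := by rw [hrsub, hrαβ]; ring
      have hdγ : 0 < d (α - β) := (hγz hrγ0).1
      rw [hdsub] at hdγ
      rw [hvβ1, hrαβ] at hc1
      push_cast at hc1
      have : d β + c1 = d α + c1 := by
        have h' : (d β + c1) * r β = (d α + c1) * r β := by linarith
        exact mul_right_cancel₀ hrβpos.ne' h'
      linarith
  have hsub : {c : ℝ | ∃ β ∈ W, (d β + c * (v β : ℝ)) * r α = (d α + c) * r β} ⊆
      ⋃ β ∈ W, {c : ℝ | (d β + c * (v β : ℝ)) * r α = (d α + c) * r β} := by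
    intro c hc
    obtain ⟨β, hβ, heq⟩ := hc
    exact Set.mem_biUnion hβ heq
  exact Set.Finite.subset (Set.Finite.biUnion hWfin key) hsub
end

section
/- Let E be a nonzero object of 𝒜 with v(cl E) = 1, and assume the set {cl F : F a subobject of E} ⊆ Γ is finite. If E is c-stable for some c ∈ ℝ, then E is both c⁺-stable and c⁻-stable. -/
open CategoryTheory CategoryTheory.Limits

/-- Cross-multiplied comparison `μ_c(x) ≤ μ_c(y)` of the slopes `μ_c = (d + c·v)/r`. -/
def slopeLE {Γ : Type*} [AddCommGroup Γ] (d r : Γ →+ ℝ) (v : Γ →+ ℤ) (c : ℝ)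
    (x y : Γ) : Prop :=
  (d x + c * (v x : ℝ)) * r y ≤ (d y + c * (v y : ℝ)) * r x

/-- Cross-multiplied comparison `μ_c(x) < μ_c(y)` of the slopes `μ_c = (d + c·v)/r`. -/
def slopeLT {Γ : Type*} [AddCommGroup Γ] (d r : Γ →+ ℝ) (v : Γ →+ ℤ) (c : ℝ)
    (x y : Γ) : Prop :=
  (d x + c * (v x : ℝ)) * r y < (d y + c * (v y : ℝ)) * r x

/-- A nonzero object `E` is `c`-semistable if `μ_c(F) ≤ μ_c(E)` for every subobject
`F ⊆ E` with `F ≠ 0`, `F ≠ E`. -/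
def IsSemistableAt {C : Type*} [Category C] [Abelian C] {Γ : Type*} [AddCommGroup Γ]
    (cl : C → Γ) (d r : Γ →+ ℝ) (v : Γ →+ ℤ) (c : ℝ) (E : C) : Prop :=
  ∀ (F : C) (f : F ⟶ E), Mono f → ¬ IsZero F → ¬ IsIso f →
    slopeLE d r v c (cl F) (cl E)

/-- A nonzero object `E` is `c`-stable if `μ_c(F) < μ_c(E)` for every subobject
`F ⊆ E` with `F ≠ 0`, `F ≠ E`. -/
def IsStableAt {C : Type*} [Category C] [Abelian C] {Γ : Type*} [AddCommGroup Γ]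
    (cl : C → Γ) (d r : Γ →+ ℝ) (v : Γ →+ ℤ) (c : ℝ) (E : C) : Prop :=
  ∀ (F : C) (f : F ⟶ E), Mono f → ¬ IsZero F → ¬ IsIso f →
    slopeLT d r v c (cl F) (cl E)

/-- `E` is `c⁺`-stable if it is `(c+ε)`-stable for all sufficiently small `ε > 0`. -/
def IsPlusStableAt {C : Type*} [Category C] [Abelian C] {Γ : Type*} [AddCommGroup Γ]
    (cl : C → Γ) (d r : Γ →+ ℝ) (v : Γ →+ ℤ) (c : ℝ) (E : C) : Prop :=
  ∃ δ > (0 : ℝ), ∀ ε : ℝ, 0 < ε → ε < δ → IsStableAt cl d r v (c + ε) E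

/-- `E` is `c⁻`-stable if it is `(c−ε)`-stable for all sufficiently small `ε > 0`. -/
def IsMinusStableAt {C : Type*} [Category C] [Abelian C] {Γ : Type*} [AddCommGroup Γ]
    (cl : C → Γ) (d r : Γ →+ ℝ) (v : Γ →+ ℤ) (c : ℝ) (E : C) : Prop :=
  ∃ δ > (0 : ℝ), ∀ ε : ℝ, 0 < ε → ε < δ → IsStableAt cl d r v (c - ε) E

/-- If a nonzero object `E` with `v(cl E) = 1` (and finitely many classes of subobjects)
is `c`-stable, then it is both `c⁺`-stable and `c⁻`-stable. -/
theorem stmt_2 {C : Type*} [Category C] [Abelian C] {Γ : Type*} [AddCommGroup Γ]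
    (cl : C → Γ) (d r : Γ →+ ℝ) (v : Γ →+ ℤ)
    (hcl0 : ∀ X : C, IsZero X → cl X = 0)
    (hses : ∀ S : ShortComplex C, S.ShortExact → cl S.X₂ = cl S.X₁ + cl S.X₃)
    (hpos : ∀ X : C, ¬ IsZero X →
      0 ≤ r (cl X) ∧ 0 ≤ v (cl X) ∧ (r (cl X) = 0 → 0 < d (cl X) ∧ v (cl X) = 0))
    (E : C) (hE : ¬ IsZero E) (hvE : v (cl E) = 1)
    (hfin : {g : Γ | ∃ (F : C) (f : F ⟶ E), Mono f ∧ cl F = g}.Finite)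
    (c : ℝ) (hst : IsStableAt cl d r v c E) :
    IsPlusStableAt cl d r v c E ∧ IsMinusStableAt cl d r v c E := by
  classical
  set y := cl E with hy
  set A : Γ → ℝ := fun g => (d g + c * (v g : ℝ)) * r y - (d y + c * (v y : ℝ)) * r g with hA
  set B : Γ → ℝ := fun g => (v g : ℝ) * r y - (v y : ℝ) * r g with hB
  set w : Γ → ℝ := fun g => if A g < 0 then -A g / (|B g| + 1) else 1 with hw
  have hSne : (hfin.toFinset).Nonempty := by
    refine ⟨cl E, ?_⟩
    rw [Set.Finite.mem_toFinset]
    exact ⟨E, 𝟙 E, inferInstance, rfl⟩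
  set δ : ℝ := hfin.toFinset.inf' hSne w with hδ
  have hδpos : 0 < δ := by
    rw [hδ, Finset.lt_inf'_iff]
    intro g _
    simp only [hw]
    split
    · apply div_pos (by linarith) (by positivity)
    · norm_num
  have key : ∀ ε : ℝ, |ε| < δ → IsStableAt cl d r v (c + ε) E := by
    intro ε hε F f hm h0 hi
    have hAF : A (cl F) < 0 := by
      have := hst F f hm h0 hi
      simp only [slopeLT] at this
      simp only [hA]
      linarith
    have hgS : cl F ∈ hfin.toFinset := by
      rw [Set.Finite.mem_toFinset]
      exact ⟨F, f, hm, rfl⟩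
    have hle : δ ≤ w (cl F) := Finset.inf'_le _ hgS
    have hwF : w (cl F) = -A (cl F) / (|B (cl F)| + 1) := if_pos hAF
    have h1 : |ε| < -A (cl F) / (|B (cl F)| + 1) := by
      rw [← hwF]; exact lt_of_lt_of_le hε hle
    have hBpos : (0:ℝ) < |B (cl F)| + 1 := by positivity
    have h2 : |ε| * (|B (cl F)| + 1) < -A (cl F) := by
      rwa [← lt_div_iff₀ hBpos]
    have h3 : ε * B (cl F) ≤ |ε| * |B (cl F)| := by
      calc ε * B (cl F) ≤ |ε * B (cl F)| := le_abs_self _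
        _ = |ε| * |B (cl F)| := abs_mul _ _
    have h4 : |ε| * |B (cl F)| ≤ |ε| * (|B (cl F)| + 1) := by
      apply mul_le_mul_of_nonneg_left (by linarith) (abs_nonneg _)
    have hfinal : A (cl F) + ε * B (cl F) < 0 := by linarith
    simp only [slopeLT]
    simp only [hA, hB] at hfinal
    nlinarith [hfinal]
  refine ⟨⟨δ, hδpos, fun ε h1 h2 => key ε (by rwa [abs_of_pos h1]), ⟩,
          ⟨δ, hδpos, fun ε h1 h2 => ?_⟩⟩
  have := key (-ε) (by rwa [abs_neg, abs_of_pos h1])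
  simpa [sub_eq_add_neg] using this
end

section
/- Let E be a nonzero object of 𝒜 with v(cl E) = 1 and let c ∈ ℝ. If E is c⁺-stable, then E is c-semistable; likewise, if E is c⁻-stable, then E is c-semistable. -/
open CategoryTheory CategoryTheory.Limits

/-!
For fixed classes the slope comparison `μ_c(F) ≤ μ_c(E)` is a non-strict inequality between
affine functions of `c`, hence a closed condition on `c`. So the strict inequalities that
`(c ± ε)`-stability gives for all small `ε > 0` pass to the limit `ε → 0` and yield
`c`-semistability.
-/

open Filter Topology

section

variable {Γ : Type*} [AddCommGroup Γ] (d r : Γ →+ ℝ) (v : Γ →+ ℤ)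

lemma isClosed_setOf_slopeLE (x y : Γ) : IsClosed {c : ℝ | slopeLE d r v c x y} := by
  unfold slopeLE
  exact isClosed_le (by fun_prop) (by fun_prop)

lemma slopeLE_of_eventually_slopeLT {l : Filter ℝ} [l.NeBot] {c : ℝ} (hl : l ≤ 𝓝 c) {x y : Γ}
    (h : ∀ᶠ c' in l, slopeLT d r v c' x y) : slopeLE d r v c x y :=
  (isClosed_setOf_slopeLE d r v x y).mem_of_tendsto (tendsto_id.mono_left hl)
    (h.mono fun _ hlt => le_of_lt hlt)

end

section

variable {C : Type*} [Category C] [Abelian C] {Γ : Type*} [AddCommGroup Γ]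
  {cl : C → Γ} {d r : Γ →+ ℝ} {v : Γ →+ ℤ} {c : ℝ} {E : C}

lemma isSemistableAt_of_eventually_isStableAt {l : Filter ℝ} [l.NeBot] (hl : l ≤ 𝓝 c)
    (h : ∀ᶠ c' in l, IsStableAt cl d r v c' E) : IsSemistableAt cl d r v c E :=
  fun F f hf hF hfi =>
    slopeLE_of_eventually_slopeLT d r v hl (h.mono fun _ hst => hst F f hf hF hfi)

lemma IsPlusStableAt.eventually_isStableAt (h : IsPlusStableAt cl d r v c E) :
    ∀ᶠ c' in 𝓝[>] c, IsStableAt cl d r v c' E := by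
  obtain ⟨δ, hδ, hst⟩ := h
  filter_upwards [Ioo_mem_nhdsGT (lt_add_of_pos_right c hδ)] with c' ⟨hc, hcδ⟩
  simpa using hst (c' - c) (sub_pos.mpr hc) (by linarith)

lemma IsMinusStableAt.eventually_isStableAt (h : IsMinusStableAt cl d r v c E) :
    ∀ᶠ c' in 𝓝[<] c, IsStableAt cl d r v c' E := by
  obtain ⟨δ, hδ, hst⟩ := h
  filter_upwards [Ioo_mem_nhdsLT (sub_lt_self c hδ)] with c' ⟨hcδ, hc⟩
  simpa using hst (c - c') (sub_pos.mpr hc) (by linarith)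

end

theorem stmt_3_general {C : Type*} [Category C] [Abelian C] {Γ : Type*} [AddCommGroup Γ]
    (cl : C → Γ) (d r : Γ →+ ℝ) (v : Γ →+ ℤ)
    (E : C) (c : ℝ) :
    (IsPlusStableAt cl d r v c E → IsSemistableAt cl d r v c E) ∧
    (IsMinusStableAt cl d r v c E → IsSemistableAt cl d r v c E) :=
  ⟨fun h => isSemistableAt_of_eventually_isStableAt nhdsWithin_le_nhds h.eventually_isStableAt,
    fun h => isSemistableAt_of_eventually_isStableAt nhdsWithin_le_nhds h.eventually_isStableAt⟩

/-- If a nonzero object `E` with `v(cl E) = 1` is `c⁺`-stable then it is `c`-semistable;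
likewise, if `E` is `c⁻`-stable then it is `c`-semistable. -/
theorem stmt_3 {C : Type*} [Category C] [Abelian C] {Γ : Type*} [AddCommGroup Γ]
    (cl : C → Γ) (d r : Γ →+ ℝ) (v : Γ →+ ℤ)
    (hcl0 : ∀ X : C, IsZero X → cl X = 0)
    (hses : ∀ S : ShortComplex C, S.ShortExact → cl S.X₂ = cl S.X₁ + cl S.X₃)
    (hpos : ∀ X : C, ¬ IsZero X →
      0 ≤ r (cl X) ∧ 0 ≤ v (cl X) ∧ (r (cl X) = 0 → 0 < d (cl X) ∧ v (cl X) = 0))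
    (E : C) (hE : ¬ IsZero E) (hvE : v (cl E) = 1) (c : ℝ) :
    (IsPlusStableAt cl d r v c E → IsSemistableAt cl d r v c E) ∧
    (IsMinusStableAt cl d r v c E → IsSemistableAt cl d r v c E) :=
  stmt_3_general cl d r v E c
end

section
/- Let E be a nonzero object of 𝒜 with v(cl E) = 1 and let c ∈ ℝ. If E is both c⁺-stable and c⁻-stable, then E is c-stable. -/
open CategoryTheory CategoryTheory.Limits

/-- If a nonzero object `E` with `v(cl E) = 1` is both `c⁺`-stable and `c⁻`-stable,
then it is `c`-stable. -/
theorem stmt_4 {C : Type*} [Category C] [Abelian C] {Γ : Type*} [AddCommGroup Γ]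
    (cl : C → Γ) (d r : Γ →+ ℝ) (v : Γ →+ ℤ)
    (hcl0 : ∀ X : C, IsZero X → cl X = 0)
    (hses : ∀ S : ShortComplex C, S.ShortExact → cl S.X₂ = cl S.X₁ + cl S.X₃)
    (hpos : ∀ X : C, ¬ IsZero X →
      0 ≤ r (cl X) ∧ 0 ≤ v (cl X) ∧ (r (cl X) = 0 → 0 < d (cl X) ∧ v (cl X) = 0))
    (E : C) (hE : ¬ IsZero E) (hvE : v (cl E) = 1) (c : ℝ)
    (hplus : IsPlusStableAt cl d r v c E) (hminus : IsMinusStableAt cl d r v c E) :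
    IsStableAt cl d r v c E := by
  obtain ⟨δ₁, hδ₁, h₁⟩ := hplus
  obtain ⟨δ₂, hδ₂, h₂⟩ := hminus
  intro F f hm hF hiso
  have hmin : 0 < min δ₁ δ₂ := lt_min hδ₁ hδ₂
  set ε := min δ₁ δ₂ / 2 with hεdef
  have hε0 : 0 < ε := by positivity
  have hε1 : ε < δ₁ := by have := min_le_left δ₁ δ₂; simp only [hεdef]; linarith
  have hε2 : ε < δ₂ := by have := min_le_right δ₁ δ₂; simp only [hεdef]; linarith
  have hp := h₁ ε hε0 hε1 F f hm hF hiso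
  have hn := h₂ ε hε0 hε2 F f hm hF hiso
  simp only [slopeLT] at hp hn ⊢
  nlinarith [hp, hn]
end

section
/- Let E be a nonzero object of 𝒜 with v(cl E) = 1, let c ∈ ℝ, assume the set {cl F : F a subobject of E} ⊆ Γ is finite, and assume every nonzero object of 𝒜 admits a c′-HN filtration for every c′ ∈ ℝ. Then the following are equivalent: (1) E is c-semistable; (2) there exists a subobject E′ of E with E′ ≠ E and v(cl E′) = 0 such that, for all sufficiently small ε > 0, the chain 0 ⊆ E′ ⊆ E is the (c−ε)-HN filtration of E (that is: either E′ = 0 and E is (c−ε)-semistable, or E′ ≠ 0, both E′ and E/E′ are (c−ε)-semistable, and μ_{c−ε}(E′) > μ_{c−ε}(E/E′)), and moreover if E′ ≠ 0 then E′ and E have equal c-slopes (both μ_c(E′) ≤ μ_c(E) and μ_c(E) ≤ μ_c(E′) hold). -/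
open CategoryTheory CategoryTheory.Limits

/-- A `c`-HN filtration of a nonzero object `X`: a chain of proper subobjects
`0 = X₀ ⊊ X₁ ⊊ ⋯ ⊊ Xₙ = X` whose successive quotients are `c`-semistable with strictly
decreasing `c`-slopes. -/
structure HNFiltration {C : Type*} [Category C] [Abelian C] {Γ : Type*} [AddCommGroup Γ]
    (cl : C → Γ) (d r : Γ →+ ℝ) (v : Γ →+ ℤ) (c : ℝ) (X : C) where
  n : ℕ
  npos : 0 < n
  obj : Fin (n + 1) → C
  isZero_zero : IsZero (obj 0)
  last_eq : obj (Fin.last n) = X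
  map : (i : Fin n) → (obj i.castSucc ⟶ obj i.succ)
  mono : ∀ i : Fin n, Mono (map i)
  not_iso : ∀ i : Fin n, ¬ IsIso (map i)
  quot_sst : ∀ i : Fin n, IsSemistableAt cl d r v c (cokernel (map i))
  slope_desc : ∀ (i : ℕ) (h : i + 1 < n),
    slopeLT d r v c (cl (cokernel (map ⟨i + 1, h⟩)))
      (cl (cokernel (map ⟨i, Nat.lt_of_succ_lt h⟩)))


/-!
Only finitely many classes occur among subobjects of `E`, so for all small `ε > 0` the slope
comparisons between them at `c - ε` are the same (those at `c⁻`), and they refine the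
comparisons at `c`. If `E` is `c`-semistable, every step of its `(c - ε)`-HN filtration has
`(c - ε)`-slope above that of `E`, hence `c`-slope exactly `μ_c(E)`. Quotients of equal `c`-slope
are ordered at `c - ε` by increasing `v/r`, so every HN quotient but the first has `v ≥ 1`, and
`v(cl E) = 1` leaves room for at most two steps. Conversely, a subobject of `E` splits along `E'`
into subobjects of `E'` and `E/E'`, so its `(c - ε)`-slope is at most `μ_{c-ε}(E')`; letting
`ε → 0` bounds its `c`-slope by `μ_c(E') = μ_c(E)`.
-/

open Filter Topology Finset

section Slopes

variable {Γ : Type*} [AddCommGroup Γ] (d r : Γ →+ ℝ) (v : Γ →+ ℤ)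

def slopeDet (c : ℝ) : Γ →+ Γ →+ ℝ :=
  AddMonoidHom.mk'
    (fun x => AddMonoidHom.mk' (fun y => (d x + c * v x) * r y - (d y + c * v y) * r x)
      fun y y' => by simp only [map_add, Int.cast_add]; ring)
    fun x x' => by ext y; simp only [AddMonoidHom.mk'_apply, AddMonoidHom.add_apply, map_add,
      Int.cast_add]; ring

def IsEffective (x : Γ) : Prop :=
  0 ≤ r x ∧ 0 ≤ v x ∧ (r x = 0 → 0 < d x ∧ v x = 0)

variable {d r v} {c : ℝ} {x y z : Γ}

lemma slopeDet_apply (c : ℝ) (x y : Γ) :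
    slopeDet d r v c x y = (d x + c * v x) * r y - (d y + c * v y) * r x := rfl

lemma slopeLE_iff_slopeDet_nonpos : slopeLE d r v c x y ↔ slopeDet d r v c x y ≤ 0 := by
  rw [slopeDet_apply, sub_nonpos, slopeLE]

lemma slopeLT_iff_slopeDet_neg : slopeLT d r v c x y ↔ slopeDet d r v c x y < 0 := by
  rw [slopeDet_apply, sub_neg, slopeLT]

lemma slopeDet_self (c : ℝ) (x : Γ) : slopeDet d r v c x x = 0 := by
  rw [slopeDet_apply, sub_self]

lemma slopeDet_swap (c : ℝ) (x y : Γ) : slopeDet d r v c y x = -slopeDet d r v c x y := by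
  simp only [slopeDet_apply]; ring

lemma slopeDet_sub (c ε : ℝ) (x y : Γ) :
    slopeDet d r v (c - ε) x y = slopeDet d r v c x y - ε * (v x * r y - v y * r x) := by
  simp only [slopeDet_apply]; ring

lemma IsEffective.r_pos_of_v_ne_zero (hx : IsEffective d r v x) (h : v x ≠ 0) : 0 < r x :=
  hx.1.lt_of_ne fun h0 => h (hx.2.2 h0.symm).2

lemma IsEffective.slopeDet_of_r_eq_zero (hx : IsEffective d r v x) (h0 : r x = 0) :
    slopeDet d r v c x y = d x * r y := by
  rw [slopeDet_apply, h0, (hx.2.2 h0).2]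
  push_cast
  ring

lemma IsEffective.r_pos_of_slopeDet_neg (hx : IsEffective d r v x) (hy : 0 ≤ r y)
    (h : slopeDet d r v c x y < 0) : 0 < r x :=
  hx.1.lt_of_ne fun h0 => by
    rw [hx.slopeDet_of_r_eq_zero h0.symm] at h
    nlinarith [(hx.2.2 h0.symm).1]

lemma IsEffective.r_pos_of_slopeDet_nonpos (hx : IsEffective d r v x) (hy : 0 < r y)
    (h : slopeDet d r v c x y ≤ 0) : 0 < r x :=
  hx.1.lt_of_ne fun h0 => by
    rw [hx.slopeDet_of_r_eq_zero h0.symm] at h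
    nlinarith [(hx.2.2 h0.symm).1]

lemma slopeDet_neg_trans (hx : IsEffective d r v x) (hy : IsEffective d r v y) (hz : 0 ≤ r z)
    (hxy : slopeDet d r v c x y < 0) (hyz : slopeDet d r v c y z < 0) :
    slopeDet d r v c x z < 0 := by
  have hry := hy.r_pos_of_slopeDet_neg hz hyz
  have hrx := hx.r_pos_of_slopeDet_neg hry.le hxy
  rw [slopeDet_apply] at *
  nlinarith

lemma slopeDet_nonpos_trans (hx : 0 ≤ r x) (hy : 0 < r y) (hz : 0 ≤ r z)
    (hxy : slopeDet d r v c x y ≤ 0) (hyz : slopeDet d r v c y z ≤ 0) :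
    slopeDet d r v c x z ≤ 0 := by
  rw [slopeDet_apply] at *
  nlinarith

lemma slopeDet_eq_zero_of_eq_zero {e : Γ} (he : 0 < r e) (hx : slopeDet d r v c x e = 0)
    (hy : slopeDet d r v c y e = 0) : slopeDet d r v c x y = 0 := by
  rw [slopeDet_apply] at *
  have : ((d x + c * v x) * r y - (d y + c * v y) * r x) * r e = 0 := by
    linear_combination r y * hx - r x * hy
  exact (mul_eq_zero.mp this).resolve_right he.ne'

/-- Among classes of equal `c`-slope, the `(c - ε)`-slope drops as `v/r` grows. -/
lemma one_le_v_of_slopeDet_sub_neg {ε : ℝ} (hx : IsEffective d r v x) (hy : IsEffective d r v y)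
    (hε : 0 < ε) (h0 : slopeDet d r v c x y = 0) (h : slopeDet d r v (c - ε) x y < 0) :
    1 ≤ v x := by
  rw [slopeDet_sub, h0, zero_sub, neg_lt_zero] at h
  have hB : 0 < (v x : ℝ) * r y - v y * r x := pos_of_mul_pos_right h hε.le
  by_contra! hv
  have hv0 : (v x : ℝ) = 0 := by exact_mod_cast le_antisymm (by omega) hx.2.1
  have : (0 : ℝ) ≤ v y := by exact_mod_cast hy.2.1
  rw [hv0, zero_mul, zero_sub, neg_pos] at hB
  nlinarith [hx.1]

/-- The partial sums are the classes of the steps of a filtration with quotients `Q j`. -/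
lemma slopeDet_sum_range_neg {Q : ℕ → Γ} {n i : ℕ} (hQ : ∀ j < n, IsEffective d r v (Q j))
    (hdesc : ∀ j, j + 1 < n → slopeDet d r v c (Q (j + 1)) (Q j) < 0) (hi : 0 < i)
    (hin : i < n) :
    slopeDet d r v c (∑ j ∈ range n, Q j) (∑ j ∈ range i, Q j) < 0 := by
  have hchain : ∀ j m, j < m → m < n → slopeDet d r v c (Q m) (Q j) < 0 := by
    intro j m hjm hmn
    induction m, hjm using Nat.le_induction with
    | base => exact hdesc j hmn
    | succ m hjm ih =>
      exact slopeDet_neg_trans (hQ _ hmn) (hQ m (by omega)) (hQ j (by omega)).1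
        (hdesc m hmn) (ih (by omega))
  rw [← sum_range_add_sum_Ico _ hin.le, map_add, AddMonoidHom.add_apply, slopeDet_self,
    zero_add, map_sum (slopeDet d r v c), AddMonoidHom.finsetSum_apply]
  refine sum_neg (fun m hm => ?_) (nonempty_Ico.mpr hin)
  rw [map_sum]
  exact sum_neg (fun j hj => hchain j m (by simp at hm hj; omega) (by simp at hm; omega))
    (nonempty_range_iff.mpr hi.ne')

end Slopes

section Perturbation

lemma Filter.eventually_iff_eventually_of_decided {α : Type*} {l : Filter α} [l.NeBot]
    {p : α → Prop} (h : (∀ᶠ x in l, p x) ∨ ∀ᶠ x in l, ¬p x) :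
    ∀ᶠ x in l, (p x ↔ ∀ᶠ y in l, p y) := by
  rcases h with h | h
  · exact h.mono fun x hx => iff_of_true hx h
  · exact h.mono fun x hx => iff_of_false hx fun h' => (h.and h').exists.elim fun _ h => h.1 h.2

lemma eventually_nhdsGT_zero_iff {p : ℝ → Prop} :
    (∀ᶠ ε in 𝓝[>] (0 : ℝ), p ε) ↔ ∃ δ > (0 : ℝ), ∀ ε : ℝ, 0 < ε → ε < δ → p ε := by
  simp only [(nhdsGT_basis (0 : ℝ)).eventually_iff, Set.mem_Ioo, and_imp, gt_iff_lt]

lemma tendsto_sub_mul_nhdsGT_zero (A B : ℝ) :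
    Tendsto (fun ε : ℝ => A - ε * B) (𝓝[>] 0) (𝓝 A) :=
  ((continuous_const.sub (continuous_id.mul continuous_const)).tendsto' 0 A
    (by simp)).mono_left nhdsWithin_le_nhds

lemma eventually_sub_mul_trichotomy (A B : ℝ) :
    (∀ᶠ ε in 𝓝[>] (0 : ℝ), A - ε * B < 0) ∨ (∀ᶠ ε in 𝓝[>] (0 : ℝ), A - ε * B = 0) ∨
      ∀ᶠ ε in 𝓝[>] (0 : ℝ), 0 < A - ε * B := by
  have hlim := tendsto_sub_mul_nhdsGT_zero A B
  have hpos : ∀ᶠ ε in 𝓝[>] (0 : ℝ), 0 < ε := self_mem_nhdsWithin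
  rcases lt_trichotomy A 0 with hA | rfl | hA
  · exact Or.inl (hlim.eventually_lt_const hA)
  · rcases lt_trichotomy B 0 with hB | rfl | hB
    · exact Or.inr (Or.inr (hpos.mono fun ε hε => by nlinarith))
    · exact Or.inr (Or.inl (Eventually.of_forall fun ε => by ring))
    · exact Or.inl (hpos.mono fun ε hε => by nlinarith)
  · exact Or.inr (Or.inr (hlim.eventually_const_lt hA))

variable {Γ : Type*} [AddCommGroup Γ] {d r : Γ →+ ℝ} {v : Γ →+ ℤ} {c : ℝ} {x y : Γ}

lemma eventually_slopeLT_sub_iff (c : ℝ) (x y : Γ) :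
    ∀ᶠ ε in 𝓝[>] (0 : ℝ),
      (slopeLT d r v (c - ε) x y ↔ ∀ᶠ ε' in 𝓝[>] (0 : ℝ), slopeLT d r v (c - ε') x y) := by
  refine eventually_iff_eventually_of_decided ?_
  simp only [slopeLT_iff_slopeDet_neg, slopeDet_sub]
  rcases eventually_sub_mul_trichotomy (slopeDet d r v c x y) (v x * r y - v y * r x)
    with h | h | h
  · exact Or.inl h
  · exact Or.inr (h.mono fun _ h => h.not_lt)
  · exact Or.inr (h.mono fun _ h => lt_asymm h)

lemma eventually_slopeLE_sub_iff (c : ℝ) (x y : Γ) :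
    ∀ᶠ ε in 𝓝[>] (0 : ℝ),
      (slopeLE d r v (c - ε) x y ↔ ∀ᶠ ε' in 𝓝[>] (0 : ℝ), slopeLE d r v (c - ε') x y) := by
  refine eventually_iff_eventually_of_decided ?_
  simp only [slopeLE_iff_slopeDet_nonpos, slopeDet_sub]
  rcases eventually_sub_mul_trichotomy (slopeDet d r v c x y) (v x * r y - v y * r x)
    with h | h | h
  · exact Or.inl (h.mono fun _ h => h.le)
  · exact Or.inl (h.mono fun _ h => h.le)
  · exact Or.inr (h.mono fun _ h => not_le.mpr h)

lemma slopeLE_of_eventually (h : ∀ᶠ ε in 𝓝[>] (0 : ℝ), slopeLE d r v (c - ε) x y) :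
    slopeLE d r v c x y := by
  simp only [slopeLE_iff_slopeDet_nonpos, slopeDet_sub] at h ⊢
  exact le_of_tendsto (tendsto_sub_mul_nhdsGT_zero _ _) h

variable (d r v) in
/-- At `c - ε`, slope comparisons between classes in `T` are those at `c⁻`. -/
def IsMinusGenericOn (T : Set Γ) (c ε : ℝ) : Prop :=
  ∀ x ∈ T, ∀ y ∈ T,
    (slopeLT d r v (c - ε) x y ↔ ∀ᶠ ε' in 𝓝[>] (0 : ℝ), slopeLT d r v (c - ε') x y) ∧
      (slopeLE d r v (c - ε) x y ↔ ∀ᶠ ε' in 𝓝[>] (0 : ℝ), slopeLE d r v (c - ε') x y)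

lemma eventually_isMinusGenericOn {T : Set Γ} (hT : T.Finite) (c : ℝ) :
    ∀ᶠ ε in 𝓝[>] (0 : ℝ), IsMinusGenericOn d r v T c ε :=
  (eventually_all_finite hT).mpr fun x _ => (eventually_all_finite hT).mpr fun y _ =>
    (eventually_slopeLT_sub_iff c x y).and (eventually_slopeLE_sub_iff c x y)

namespace IsMinusGenericOn

variable {T : Set Γ} {ε₁ ε₂ : ℝ}

lemma slopeLT_congr (h₁ : IsMinusGenericOn d r v T c ε₁) (h₂ : IsMinusGenericOn d r v T c ε₂)
    (hx : x ∈ T) (hy : y ∈ T) (h : slopeLT d r v (c - ε₁) x y) : slopeLT d r v (c - ε₂) x y :=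
  (h₂ x hx y hy).1.mpr ((h₁ x hx y hy).1.mp h)

lemma slopeLE_congr (h₁ : IsMinusGenericOn d r v T c ε₁) (h₂ : IsMinusGenericOn d r v T c ε₂)
    (hx : x ∈ T) (hy : y ∈ T) (h : slopeLE d r v (c - ε₁) x y) : slopeLE d r v (c - ε₂) x y :=
  (h₂ x hx y hy).2.mpr ((h₁ x hx y hy).2.mp h)

lemma slopeLE_of_slopeLT (h₁ : IsMinusGenericOn d r v T c ε₁) (hx : x ∈ T) (hy : y ∈ T)
    (h : slopeLT d r v (c - ε₁) x y) : slopeLE d r v c x y :=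
  slopeLE_of_eventually (((h₁ x hx y hy).1.mp h).mono fun _ h => h.le)

end IsMinusGenericOn

end Perturbation

section Subobjects

variable {C : Type*} [Category C] {Γ : Type*}

def subobjectClasses (cl : C → Γ) (E : C) : Set Γ :=
  {g | ∃ (F : C) (f : F ⟶ E), Mono f ∧ cl F = g}

variable {cl : C → Γ}

lemma mem_subobjectClasses {F E : C} (f : F ⟶ E) [Mono f] : cl F ∈ subobjectClasses cl E :=
  ⟨F, f, inferInstance, rfl⟩

lemma subobjectClasses_subset_of_mono {E' E : C} (f : E' ⟶ E) [Mono f] :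
    subobjectClasses cl E' ⊆ subobjectClasses cl E := by
  rintro _ ⟨F, g, hg, rfl⟩
  exact ⟨F, g ≫ f, mono_comp g f, rfl⟩

end Subobjects

section Additive

variable {C : Type*} [Category C] [Abelian C] {Γ : Type*} [AddCommGroup Γ]

structure IsAdditiveInvariant (cl : C → Γ) : Prop where
  eq_zero : ∀ X : C, IsZero X → cl X = 0
  shortExact : ∀ S : ShortComplex C, S.ShortExact → cl S.X₂ = cl S.X₁ + cl S.X₃

variable {cl : C → Γ}

namespace IsAdditiveInvariant

lemma eq_add_cokernel (hcl : IsAdditiveInvariant cl) {X Y : C} (f : X ⟶ Y) [Mono f] :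
    cl Y = cl X + cl (cokernel f) :=
  hcl.shortExact (ShortComplex.mk f (cokernel.π f) (cokernel.condition f))
    { exact := ShortComplex.exact_of_g_is_cokernel _ (cokernelIsCokernel f) }

lemma eq_kernel_add (hcl : IsAdditiveInvariant cl) {X Y : C} (g : X ⟶ Y) [Epi g] :
    cl X = cl (kernel g) + cl Y :=
  hcl.shortExact (ShortComplex.mk (kernel.ι g) g (kernel.condition g))
    { exact := ShortComplex.exact_of_f_is_kernel _ (kernelIsKernel g) }

lemma eq_of_iso (hcl : IsAdditiveInvariant cl) {X Y : C} (e : X ≅ Y) : cl X = cl Y := by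
  rw [hcl.eq_add_cokernel e.hom, hcl.eq_zero _ (isZero_cokernel_of_epi e.hom), add_zero]

lemma eq_kernel_add_image (hcl : IsAdditiveInvariant cl) {X Y : C} (φ : X ⟶ Y) :
    cl X = cl (kernel φ) + cl (image φ) := by
  rw [hcl.eq_kernel_add (factorThruImage φ),
    hcl.eq_of_iso (kernelIsoOfEq (image.fac φ).symm ≪≫ kernelCompMono _ _)]

lemma r_nonneg {d r : Γ →+ ℝ} {v : Γ →+ ℤ} (hcl : IsAdditiveInvariant cl)
    (hpos : ∀ X : C, ¬IsZero X → IsEffective d r v (cl X)) (X : C) : 0 ≤ r (cl X) := by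
  by_cases hX : IsZero X
  · rw [hcl.eq_zero X hX, map_zero]
  · exact (hpos X hX).1

lemma exists_eq_add_of_mono (hcl : IsAdditiveInvariant cl) {E' E F : C} (f : E' ⟶ E) [Mono f]
    (g : F ⟶ E) [Mono g] :
    ∃ (K I : C) (k : K ⟶ E') (i : I ⟶ cokernel f), Mono k ∧ Mono i ∧ cl F = cl K + cl I := by
  let φ : F ⟶ cokernel f := g ≫ cokernel.π f
  have hφ : (kernel.ι φ ≫ g) ≫ cokernel.π f = 0 := by
    rw [Category.assoc, kernel.condition]
  let k := Abelian.monoLift f (kernel.ι φ ≫ g) hφ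
  have : Mono (k ≫ f) := by
    rw [Abelian.monoLift_comp]
    exact mono_comp _ _
  exact ⟨kernel φ, image φ, k, image.ι φ, mono_of_mono k f, inferInstance,
    hcl.eq_kernel_add_image φ⟩

lemma zero_mem_subobjectClasses (hcl : IsAdditiveInvariant cl) (E : C) :
    (0 : Γ) ∈ subobjectClasses cl E :=
  ⟨kernel (𝟙 E), kernel.ι (𝟙 E), inferInstance, hcl.eq_zero _ (isZero_kernel_of_mono _)⟩

lemma subobjectClasses_cokernel_subset (hcl : IsAdditiveInvariant cl) {E' E : C} (f : E' ⟶ E)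
    [Mono f] : subobjectClasses cl (cokernel f) ⊆ (· - cl E') '' subobjectClasses cl E := by
  rintro _ ⟨G, u, hu, rfl⟩
  let ψ : E ⟶ cokernel u := cokernel.π f ≫ cokernel.π u
  refine ⟨cl (kernel ψ), mem_subobjectClasses (kernel.ι ψ), ?_⟩
  have h₁ : cl E = cl (kernel ψ) + cl (cokernel u) := hcl.eq_kernel_add ψ
  have h₂ : cl (cokernel f) = cl G + cl (cokernel u) := hcl.eq_add_cokernel u
  have h₃ : cl E = cl E' + cl (cokernel f) := hcl.eq_add_cokernel f
  rw [sub_eq_iff_eq_add]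
  apply add_right_cancel (b := cl (cokernel u))
  rw [← h₁, h₃, h₂]
  abel

end IsAdditiveInvariant

end Additive

namespace IsSemistableAt

variable {C : Type*} [Category C] [Abelian C] {Γ : Type*} [AddCommGroup Γ] {cl : C → Γ}
  {d r : Γ →+ ℝ} {v : Γ →+ ℤ} {c : ℝ} {X : C}

lemma of_iso (hcl : IsAdditiveInvariant cl) {Y : C} (e : X ≅ Y)
    (h : IsSemistableAt cl d r v c X) : IsSemistableAt cl d r v c Y := by
  intro F f hf hF hfi
  rw [← hcl.eq_of_iso e]
  refine h F (f ≫ e.inv) (mono_comp f e.inv) hF fun hi => hfi ?_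
  simpa using IsIso.comp_isIso' hi (inferInstance : IsIso e.hom)

lemma slopeDet_nonpos (hcl : IsAdditiveInvariant cl) (h : IsSemistableAt cl d r v c X) {F : C}
    (g : F ⟶ X) [Mono g] : slopeDet d r v c (cl F) (cl X) ≤ 0 := by
  by_cases hF : IsZero F
  · rw [hcl.eq_zero F hF, map_zero, AddMonoidHom.zero_apply]
  by_cases hg : IsIso g
  · rw [hcl.eq_of_iso (asIso g), slopeDet_self]
  · exact slopeLE_iff_slopeDet_nonpos.mp (h F g inferInstance hF hg)

lemma of_eventually (h : ∀ᶠ ε in 𝓝[>] (0 : ℝ), IsSemistableAt cl d r v (c - ε) X) :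
    IsSemistableAt cl d r v c X := fun F f hf hF hfi =>
  slopeLE_of_eventually (h.mono fun _ h => h F f hf hF hfi)

lemma sub_of_isMinusGenericOn {T : Set Γ} {ε₁ ε₂ : ℝ} (hX : subobjectClasses cl X ⊆ T)
    (h₁ : IsMinusGenericOn d r v T c ε₁) (h₂ : IsMinusGenericOn d r v T c ε₂)
    (h : IsSemistableAt cl d r v (c - ε₁) X) : IsSemistableAt cl d r v (c - ε₂) X :=
  fun F f hf hF hfi => h₁.slopeLE_congr h₂ (hX (mem_subobjectClasses f))
    (hX (mem_subobjectClasses (𝟙 X))) (h F f hf hF hfi)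

end IsSemistableAt

lemma slopeDet_nonpos_of_isSemistableAt_cokernel {C : Type*} [Category C] [Abelian C]
    {Γ : Type*} [AddCommGroup Γ] {cl : C → Γ} {d r : Γ →+ ℝ} {v : Γ →+ ℤ} {c : ℝ}
    (hcl : IsAdditiveInvariant cl) (hpos : ∀ X : C, ¬IsZero X → IsEffective d r v (cl X))
    {E' E F : C} (f : E' ⟶ E) [Mono f] (hE' : IsSemistableAt cl d r v c E')
    (hQ : IsSemistableAt cl d r v c (cokernel f))
    (hlt : slopeLT d r v c (cl (cokernel f)) (cl E')) (g : F ⟶ E) [Mono g] :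
    slopeDet d r v c (cl F) (cl E') ≤ 0 := by
  rw [slopeLT_iff_slopeDet_neg] at hlt
  have hQ0 : ¬IsZero (cokernel f) := fun h => by
    rw [hcl.eq_zero _ h, map_zero, AddMonoidHom.zero_apply] at hlt
    exact lt_irrefl 0 hlt
  have hrQ := (hpos _ hQ0).r_pos_of_slopeDet_neg (hcl.r_nonneg hpos E') hlt
  obtain ⟨K, I, k, i, hk, hi, hF⟩ := hcl.exists_eq_add_of_mono f g
  have hK : slopeDet d r v c (cl K) (cl E') ≤ 0 := hE'.slopeDet_nonpos hcl k
  have hI : slopeDet d r v c (cl I) (cl E') ≤ 0 :=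
    slopeDet_nonpos_trans (hcl.r_nonneg hpos I) hrQ (hcl.r_nonneg hpos E')
      (hQ.slopeDet_nonpos hcl i) hlt.le
  rw [hF, map_add, AddMonoidHom.add_apply]
  exact add_nonpos hK hI

namespace HNFiltration

variable {C : Type*} [Category C] [Abelian C] {Γ : Type*} [AddCommGroup Γ] {cl : C → Γ}
  {d r : Γ →+ ℝ} {v : Γ →+ ℤ} {c : ℝ} {X : C} (F : HNFiltration cl d r v c X)

/-- `cl (X_{j+1}/X_j)`, and `0` for `j ≥ n`. -/
noncomputable def quotientClass (j : ℕ) : Γ :=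
  if h : j < F.n then cl (cokernel (F.map ⟨j, h⟩)) else 0

lemma quotientClass_of_lt {j : ℕ} (h : j < F.n) :
    F.quotientClass j = cl (cokernel (F.map ⟨j, h⟩)) :=
  dif_pos h

lemma not_isZero_obj_succ (i : Fin F.n) : ¬IsZero (F.obj i.succ) := fun h => by
  have := F.mono i
  exact F.not_iso i ⟨0, (IsZero.of_mono (F.map i) h).eq_of_src _ _, h.eq_of_src _ _⟩

lemma not_isZero_cokernel (i : Fin F.n) : ¬IsZero (cokernel (F.map i)) := fun h => by
  have := F.mono i
  have := Preadditive.epi_of_isZero_cokernel _ h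
  exact F.not_iso i (isIso_of_mono_of_epi _)

lemma isEffective_quotientClass (hpos : ∀ X : C, ¬IsZero X → IsEffective d r v (cl X)) {j : ℕ}
    (hj : j < F.n) : IsEffective d r v (F.quotientClass j) := by
  rw [F.quotientClass_of_lt hj]
  exact hpos _ (F.not_isZero_cokernel _)

lemma exists_mono_obj (i : Fin (F.n + 1)) : ∃ g : F.obj i ⟶ X, Mono g := by
  suffices h : ∃ g : F.obj i ⟶ F.obj (Fin.last F.n), Mono g by
    obtain ⟨g, hg⟩ := h
    exact ⟨g ≫ eqToHom F.last_eq, mono_comp _ _⟩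
  induction i using Fin.reverseInduction with
  | last => exact ⟨𝟙 _, inferInstance⟩
  | cast i ih =>
    obtain ⟨g, hg⟩ := ih
    have := F.mono i
    exact ⟨F.map i ≫ g, mono_comp _ _⟩

lemma cl_obj (hcl : IsAdditiveInvariant cl) (i : ℕ) (hi : i < F.n + 1) :
    cl (F.obj ⟨i, hi⟩) = ∑ j ∈ range i, F.quotientClass j := by
  induction i with
  | zero => exact hcl.eq_zero _ F.isZero_zero
  | succ i ih =>
    have := F.mono ⟨i, by omega⟩
    rw [sum_range_succ, ← ih (by omega), F.quotientClass_of_lt (by omega)]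
    exact hcl.eq_add_cokernel _

lemma cl_eq_sum (hcl : IsAdditiveInvariant cl) :
    cl X = ∑ j ∈ range F.n, F.quotientClass j :=
  calc cl X = cl (F.obj (Fin.last F.n)) := by rw [F.last_eq]
    _ = _ := F.cl_obj hcl F.n (by omega)

lemma slopeLT_obj (hcl : IsAdditiveInvariant cl)
    (hpos : ∀ X : C, ¬IsZero X → IsEffective d r v (cl X)) {i : ℕ} (hi : 0 < i) (hin : i < F.n) :
    slopeLT d r v c (cl X) (cl (F.obj ⟨i, by omega⟩)) := by
  rw [slopeLT_iff_slopeDet_neg, F.cl_eq_sum hcl, F.cl_obj hcl]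
  refine slopeDet_sum_range_neg (fun j hj => F.isEffective_quotientClass hpos hj)
    (fun j hj => ?_) hi hin
  rw [F.quotientClass_of_lt hj, F.quotientClass_of_lt (by omega), ← slopeLT_iff_slopeDet_neg]
  exact F.slope_desc j hj

lemma isSemistableAt_obj_one (hcl : IsAdditiveInvariant cl) :
    IsSemistableAt cl d r v c (F.obj ⟨1, by have := F.npos; omega⟩) :=
  (F.quot_sst ⟨0, F.npos⟩).of_iso hcl
    (cokernelIsoOfEq (F.isZero_zero.eq_of_src _ _) ≪≫ cokernelZeroIsoTarget)

lemma isSemistableAt_of_n_eq_one (hcl : IsAdditiveInvariant cl) (h : F.n = 1) :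
    IsSemistableAt cl d r v c X := by
  have hss := F.isSemistableAt_obj_one hcl
  rwa [show (⟨1, _⟩ : Fin (F.n + 1)) = Fin.last F.n from Fin.ext h.symm, F.last_eq] at hss

lemma exists_of_n_eq_two (hcl : IsAdditiveInvariant cl) (h : F.n = 2) :
    ∃ (E' : C) (f : E' ⟶ X), Mono f ∧ ¬IsIso f ∧ cl E' = F.quotientClass 0 ∧ ¬IsZero E' ∧
      IsSemistableAt cl d r v c E' ∧ IsSemistableAt cl d r v c (cokernel f) ∧
      slopeLT d r v c (cl (cokernel f)) (cl E') := by
  have hss := F.isSemistableAt_obj_one hcl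
  have hcl₁ := F.cl_obj hcl 1 (by omega)
  have hnz := F.not_isZero_obj_succ ⟨0, by omega⟩
  revert h hss hcl₁ hnz
  obtain ⟨n, -, obj, -, rfl, map, hmono, hniso, hsst, hdesc⟩ := F
  intro h hss hcl₁ hnz
  obtain rfl : n = 2 := h
  simp only [sum_range_one] at hcl₁
  refine ⟨obj ⟨1, by omega⟩, map ⟨1, by omega⟩, hmono _, hniso _, hcl₁, hnz, hss, hsst _, ?_⟩
  rw [hcl₁, quotientClass_of_lt _ (by norm_num)]
  exact hdesc 0 (by norm_num)

end HNFiltration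

section Main

open ZeroObject

variable {C : Type*} [Category C] [Abelian C] {Γ : Type*} [AddCommGroup Γ] {cl : C → Γ}
  {d r : Γ →+ ℝ} {v : Γ →+ ℤ} {c : ℝ}

lemma HNFiltration.slopeDet_quotientClass_eq_zero {X : C} {ε : ℝ}
    (hcl : IsAdditiveInvariant cl) (hpos : ∀ X : C, ¬IsZero X → IsEffective d r v (cl X))
    (F : HNFiltration cl d r v (c - ε) X) (hss : IsSemistableAt cl d r v c X)
    (hlim : ∀ x ∈ subobjectClasses cl X,
      slopeLT d r v (c - ε) (cl X) x → slopeLE d r v c (cl X) x) {j : ℕ} (hj : j < F.n) :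
    slopeDet d r v c (F.quotientClass j) (cl X) = 0 := by
  have hsteps : ∀ i ≤ F.n, slopeDet d r v c (∑ j ∈ range i, F.quotientClass j) (cl X) = 0 := by
    intro i hi
    rcases Nat.eq_zero_or_pos i with rfl | hi0
    · rw [sum_range_zero, map_zero, AddMonoidHom.zero_apply]
    rcases hi.eq_or_lt with rfl | hin
    · rw [← F.cl_eq_sum hcl, slopeDet_self]
    obtain ⟨g, hg⟩ := F.exists_mono_obj ⟨i, by omega⟩
    rw [← F.cl_obj hcl i (by omega)]
    refine le_antisymm (hss.slopeDet_nonpos hcl g) ?_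
    rw [← neg_nonpos, ← slopeDet_swap, ← slopeLE_iff_slopeDet_nonpos]
    exact hlim _ (mem_subobjectClasses g) (F.slopeLT_obj hcl hpos hi0 hin)
  have h := hsteps (j + 1) hj
  rwa [sum_range_succ, map_add, AddMonoidHom.add_apply, hsteps j hj.le, zero_add] at h

lemma HNFiltration.n_eq_one_or_two {X : C} {ε : ℝ} (hcl : IsAdditiveInvariant cl)
    (hpos : ∀ X : C, ¬IsZero X → IsEffective d r v (cl X))
    (F : HNFiltration cl d r v (c - ε) X) (hε : 0 < ε) (hX : ¬IsZero X) (hvX : v (cl X) = 1)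
    (hss : IsSemistableAt cl d r v c X)
    (hlim : ∀ x ∈ subobjectClasses cl X,
      slopeLT d r v (c - ε) (cl X) x → slopeLE d r v c (cl X) x) :
    F.n = 1 ∨ F.n = 2 ∧ v (F.quotientClass 0) = 0 ∧
      slopeDet d r v c (F.quotientClass 0) (cl X) = 0 := by
  have hrX : 0 < r (cl X) := (hpos X hX).r_pos_of_v_ne_zero (by rw [hvX]; norm_num)
  have hquot : ∀ j < F.n, slopeDet d r v c (F.quotientClass j) (cl X) = 0 := fun j hj =>
    F.slopeDet_quotientClass_eq_zero hcl hpos hss hlim hj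
  have hv : ∀ j ∈ Ico 1 F.n, 1 ≤ v (F.quotientClass j) := by
    intro j hj
    obtain ⟨k, rfl⟩ : ∃ k, j = k + 1 := ⟨j - 1, by simp at hj; omega⟩
    have hk : k + 1 < F.n := (mem_Ico.mp hj).2
    refine one_le_v_of_slopeDet_sub_neg (F.isEffective_quotientClass hpos hk)
      (F.isEffective_quotientClass hpos (by omega)) hε
      (slopeDet_eq_zero_of_eq_zero hrX (hquot _ hk) (hquot k (by omega))) ?_
    rw [F.quotientClass_of_lt hk, F.quotientClass_of_lt (by omega), ← slopeLT_iff_slopeDet_neg]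
    exact F.slope_desc k hk
  have hsum : v (F.quotientClass 0) + ∑ j ∈ Ico 1 F.n, v (F.quotientClass j) = 1 := by
    rw [← hvX, F.cl_eq_sum hcl, map_sum, ← sum_range_add_sum_Ico _ F.npos, sum_range_one]
  have hcard : ((Ico 1 F.n).card : ℤ) ≤ ∑ j ∈ Ico 1 F.n, v (F.quotientClass j) := by
    simpa using card_nsmul_le_sum (Ico 1 F.n) _ 1 hv
  have hv0 := (F.isEffective_quotientClass hpos F.npos).2.1
  have := F.npos
  rw [Nat.card_Ico] at hcard
  rcases (show F.n = 1 ∨ F.n = 2 by omega) with h | h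
  · exact Or.inl h
  · exact Or.inr ⟨h, by omega, hquot 0 (by omega)⟩

lemma exists_minus_HN_of_isSemistableAt (hcl : IsAdditiveInvariant cl)
    (hpos : ∀ X : C, ¬IsZero X → IsEffective d r v (cl X)) {E : C} (hE : ¬IsZero E)
    (hvE : v (cl E) = 1) (hfin : (subobjectClasses cl E).Finite)
    (hHN : ∀ c' : ℝ, Nonempty (HNFiltration cl d r v c' E))
    (hss : IsSemistableAt cl d r v c E) :
    ∃ (E' : C) (f : E' ⟶ E), Mono f ∧ ¬IsIso f ∧ v (cl E') = 0 ∧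
      (∀ᶠ ε in 𝓝[>] (0 : ℝ),
        (IsZero E' ∧ IsSemistableAt cl d r v (c - ε) E) ∨
        (¬IsZero E' ∧ IsSemistableAt cl d r v (c - ε) E' ∧
          IsSemistableAt cl d r v (c - ε) (cokernel f) ∧
          slopeLT d r v (c - ε) (cl (cokernel f)) (cl E'))) ∧
      (¬IsZero E' → slopeLE d r v c (cl E') (cl E) ∧ slopeLE d r v c (cl E) (cl E')) := by
  set S := subobjectClasses cl E
  set T := Set.image2 (· - ·) S S
  have hST : S ⊆ T := fun x hx => ⟨x, hx, 0, hcl.zero_mem_subobjectClasses E, sub_zero x⟩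
  have hES : cl E ∈ S := mem_subobjectClasses (𝟙 E)
  have hgen : ∀ᶠ ε in 𝓝[>] (0 : ℝ), IsMinusGenericOn d r v T c ε :=
    eventually_isMinusGenericOn (hfin.image2 _ hfin) c
  obtain ⟨ε₁, hgen₁, hε₁⟩ := (hgen.and self_mem_nhdsWithin).exists
  obtain ⟨F⟩ := hHN (c - ε₁)
  rcases F.n_eq_one_or_two hcl hpos hε₁ hE hvE hss
    (fun x hx => hgen₁.slopeLE_of_slopeLT (hST hES) (hST hx)) with h1 | ⟨h2, hv0, hdet⟩
  · refine ⟨0, 0, mono_of_source_iso_zero _ (Iso.refl _),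
      fun h => hE ((isZero_zero C).of_iso (@asIso _ _ _ _ (0 : (0 : C) ⟶ E) h).symm),
      by rw [hcl.eq_zero _ (isZero_zero C), map_zero], hgen.mono fun ε hε => Or.inl
        ⟨isZero_zero C, (F.isSemistableAt_of_n_eq_one hcl h1).sub_of_isMinusGenericOn hST hgen₁ hε⟩,
      fun h => absurd (isZero_zero C) h⟩
  obtain ⟨E', f, hf, hfi, hclE', hE', hssE', hssQ, hlt⟩ := F.exists_of_n_eq_two hcl h2
  have hE'T : subobjectClasses cl E' ⊆ T := (subobjectClasses_subset_of_mono f).trans hST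
  have hQT : subobjectClasses cl (cokernel f) ⊆ T := by
    refine (hcl.subobjectClasses_cokernel_subset f).trans ?_
    rintro _ ⟨x, hx, rfl⟩
    exact ⟨x, hx, cl E', mem_subobjectClasses f, rfl⟩
  refine ⟨E', f, hf, hfi, hclE' ▸ hv0, hgen.mono fun ε hε => Or.inr ⟨hE',
    hssE'.sub_of_isMinusGenericOn hE'T hgen₁ hε, hssQ.sub_of_isMinusGenericOn hQT hgen₁ hε,
    hgen₁.slopeLT_congr hε (hQT (mem_subobjectClasses (𝟙 _)))
      (hE'T (mem_subobjectClasses (𝟙 _))) hlt⟩, fun _ => ?_⟩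
  rw [slopeLE_iff_slopeDet_nonpos, slopeLE_iff_slopeDet_nonpos, slopeDet_swap c (cl E'),
    hclE', hdet, neg_zero]
  exact ⟨le_rfl, le_rfl⟩

lemma isSemistableAt_of_minus_HN (hcl : IsAdditiveInvariant cl)
    (hpos : ∀ X : C, ¬IsZero X → IsEffective d r v (cl X)) {E' E : C} (hrE : 0 < r (cl E))
    (f : E' ⟶ E) [Mono f]
    (h : ∀ᶠ ε in 𝓝[>] (0 : ℝ),
      (IsZero E' ∧ IsSemistableAt cl d r v (c - ε) E) ∨
      (¬IsZero E' ∧ IsSemistableAt cl d r v (c - ε) E' ∧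
        IsSemistableAt cl d r v (c - ε) (cokernel f) ∧
        slopeLT d r v (c - ε) (cl (cokernel f)) (cl E')))
    (heq : ¬IsZero E' → slopeLE d r v c (cl E') (cl E)) :
    IsSemistableAt cl d r v c E := by
  by_cases hE' : IsZero E'
  · exact IsSemistableAt.of_eventually (h.mono fun _ h => (h.resolve_right fun h => h.1 hE').2)
  intro F g hg hF hgi
  have hFE' : slopeLE d r v c (cl F) (cl E') := slopeLE_of_eventually <| h.mono fun _ h => by
    obtain ⟨-, hssE', hssQ, hlt⟩ := h.resolve_left fun h => hE' h.1
    exact slopeLE_iff_slopeDet_nonpos.mpr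
      (slopeDet_nonpos_of_isSemistableAt_cokernel hcl hpos f hssE' hssQ hlt g)
  have hE'E := slopeLE_iff_slopeDet_nonpos.mp (heq hE')
  rw [slopeLE_iff_slopeDet_nonpos] at hFE' ⊢
  exact slopeDet_nonpos_trans (hpos F hF).1 ((hpos E' hE').r_pos_of_slopeDet_nonpos hrE hE'E)
    hrE.le hFE' hE'E

end Main

/-- A nonzero object `E` with `v(cl E) = 1` is `c`-semistable iff it has a subobject
`E' ⊊ E` with `v(cl E') = 0` such that for all small `ε > 0` the chain `0 ⊆ E' ⊆ E` is the
`(c−ε)`-HN filtration of `E`, and if `E' ≠ 0` then `E'` and `E` have equal `c`-slopes. -/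
theorem stmt_5 {C : Type*} [Category C] [Abelian C] {Γ : Type*} [AddCommGroup Γ]
    (cl : C → Γ) (d r : Γ →+ ℝ) (v : Γ →+ ℤ)
    (hcl0 : ∀ X : C, IsZero X → cl X = 0)
    (hses : ∀ S : ShortComplex C, S.ShortExact → cl S.X₂ = cl S.X₁ + cl S.X₃)
    (hpos : ∀ X : C, ¬ IsZero X →
      0 ≤ r (cl X) ∧ 0 ≤ v (cl X) ∧ (r (cl X) = 0 → 0 < d (cl X) ∧ v (cl X) = 0))
    (E : C) (hE : ¬ IsZero E) (hvE : v (cl E) = 1) (c : ℝ)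
    (hfin : {g : Γ | ∃ (F : C) (f : F ⟶ E), Mono f ∧ cl F = g}.Finite)
    (hHN : ∀ (c' : ℝ) (X : C), ¬ IsZero X → Nonempty (HNFiltration cl d r v c' X)) :
    IsSemistableAt cl d r v c E ↔
      ∃ (E' : C) (f : E' ⟶ E), Mono f ∧ ¬ IsIso f ∧ v (cl E') = 0 ∧
        (∃ δ > (0 : ℝ), ∀ ε : ℝ, 0 < ε → ε < δ →
          ((IsZero E' ∧ IsSemistableAt cl d r v (c - ε) E) ∨
           (¬ IsZero E' ∧ IsSemistableAt cl d r v (c - ε) E' ∧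
             IsSemistableAt cl d r v (c - ε) (cokernel f) ∧
             slopeLT d r v (c - ε) (cl (cokernel f)) (cl E')))) ∧
        (¬ IsZero E' →
          slopeLE d r v c (cl E') (cl E) ∧ slopeLE d r v c (cl E) (cl E')) := by
  have hcl : IsAdditiveInvariant cl := ⟨hcl0, hses⟩
  simp only [← eventually_nhdsGT_zero_iff]
  constructor
  · exact exists_minus_HN_of_isSemistableAt hcl hpos hE hvE hfin fun c' => hHN c' E hE
  · rintro ⟨E', f, hf, -, -, h, heq⟩
    exact isSemistableAt_of_minus_HN hcl hpos
      (IsEffective.r_pos_of_v_ne_zero (hpos E hE) (by rw [hvE]; norm_num)) f h fun h => (heq h).1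
end

section
/- Let E be a nonzero c-semistable object of 𝒜 with v(cl E) = 1, and assume the set {cl F : F a subobject of E} ⊆ Γ is finite. Let E′′ be a subobject of E with E′′ ≠ 0 such that, for all sufficiently small ε > 0, the chain 0 ⊆ E′′ ⊆ E is the (c+ε)-HN filtration of E (that is: either E′′ = E and E is (c+ε)-semistable, or E′′ ≠ E, both E′′ and E/E′′ are (c+ε)-semistable, and μ_{c+ε}(E′′) > μ_{c+ε}(E/E′′)). If E is c⁻-stable, then the subobject E′′ is c-stable. -/
open CategoryTheory CategoryTheory.Limits

/-! Write `slopeGap c x y = (d x + c v x) r y - (d y + c v y) r x`. It is affine in `c` with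
slope `framingGap x y = v x r y - v y r x`, so comparing slopes at `c ± ε` for small `ε`
means comparing them at `c` and breaking ties by the framing gap.

If `E'' = E`, the `(c+ε)`-semistability and the `(c-ε)`-stability of `E` break a tie at `c` in
opposite directions, so no proper subobject has the `c`-slope of `E`. If `E'' ⊊ E`, the
tie-break shows that `E''` has the `c`-slope of `E` and framing `1`. A subobject `F ⊊ E''` of
the same `c`-slope then has the `c`-slope of `E`, so `c⁻`-stability of `E` forces `v F = 1`;
the `(c+ε)`-semistability of `E''` then forces `E''/F` to have rank and framing `0`, hence
positive degree, which puts the `c`-slope of `F` strictly below that of `E''`. -/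

open Filter Topology

lemma nonpos_of_forall_add_mul_nonpos {a b δ : ℝ} (hδ : 0 < δ)
    (h : ∀ ε : ℝ, 0 < ε → ε < δ → a + ε * b ≤ 0) : a ≤ 0 := by
  have hlim : Tendsto (fun ε : ℝ => a + ε * b) (𝓝[>] 0) (𝓝 a) := by
    have hcont : Continuous (fun ε : ℝ => a + ε * b) := by fun_prop
    simpa using (hcont.tendsto 0).mono_left nhdsWithin_le_nhds
  exact le_of_tendsto hlim
    (eventually_of_mem (Ioo_mem_nhdsGT hδ) fun ε hε => h ε hε.1 hε.2)

section SlopeGap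

variable {Γ : Type*} [AddCommGroup Γ]

def slopeGap (d r : Γ →+ ℝ) (v : Γ →+ ℤ) (c : ℝ) (x y : Γ) : ℝ :=
  (d x + c * (v x : ℝ)) * r y - (d y + c * (v y : ℝ)) * r x

def framingGap (r : Γ →+ ℝ) (v : Γ →+ ℤ) (x y : Γ) : ℝ :=
  (v x : ℝ) * r y - (v y : ℝ) * r x

variable {d r : Γ →+ ℝ} {v : Γ →+ ℤ} {c : ℝ} {x y z : Γ}

lemma slopeLE_iff_slopeGap_nonpos : slopeLE d r v c x y ↔ slopeGap d r v c x y ≤ 0 :=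
  sub_nonpos.symm

lemma slopeLT_iff_slopeGap_neg : slopeLT d r v c x y ↔ slopeGap d r v c x y < 0 :=
  sub_neg.symm

lemma slopeGap_add (c ε : ℝ) (x y : Γ) :
    slopeGap d r v (c + ε) x y = slopeGap d r v c x y + ε * framingGap r v x y := by
  unfold slopeGap framingGap; ring

lemma slopeGap_sub (c ε : ℝ) (x y : Γ) :
    slopeGap d r v (c - ε) x y = slopeGap d r v c x y - ε * framingGap r v x y := by
  unfold slopeGap framingGap; ring

lemma slopeGap_swap (c : ℝ) (x y : Γ) : slopeGap d r v c y x = -slopeGap d r v c x y := by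
  unfold slopeGap; ring

lemma framingGap_swap (x y : Γ) : framingGap r v y x = -framingGap r v x y := by
  unfold framingGap; ring

lemma slopeGap_add_left_self (c : ℝ) (x y : Γ) :
    slopeGap d r v c (x + y) x = slopeGap d r v c y x := by
  simp only [slopeGap, map_add, Int.cast_add]; ring

lemma slopeGap_self_add_right (c : ℝ) (x y : Γ) :
    slopeGap d r v c x (x + y) = slopeGap d r v c x y := by
  simp only [slopeGap, map_add, Int.cast_add]; ring

lemma slopeGap_eq_zero_trans (hy : r y ≠ 0) (hxy : slopeGap d r v c x y = 0)
    (hyz : slopeGap d r v c y z = 0) : slopeGap d r v c x z = 0 := by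
  have key : r y * slopeGap d r v c x z =
      r x * slopeGap d r v c y z + r z * slopeGap d r v c x y := by
    unfold slopeGap; ring
  rw [hxy, hyz, mul_zero, mul_zero, add_zero] at key
  exact (mul_eq_zero.mp key).resolve_left hy

lemma slopeLE_of_forall_slopeLE_add {δ : ℝ} (hδ : 0 < δ)
    (h : ∀ ε : ℝ, 0 < ε → ε < δ → slopeLE d r v (c + ε) x y) : slopeLE d r v c x y := by
  rw [slopeLE_iff_slopeGap_nonpos]
  refine nonpos_of_forall_add_mul_nonpos (b := framingGap r v x y) hδ fun ε h₁ h₂ => ?_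
  rw [← slopeGap_add, ← slopeLE_iff_slopeGap_nonpos]
  exact h ε h₁ h₂

lemma slopeLT_of_slopeLE_add_of_slopeLT_sub {ε ε' : ℝ} (hε : 0 < ε) (hε' : 0 < ε')
    (hplus : slopeLE d r v (c + ε) x y) (hminus : slopeLT d r v (c - ε') x y) :
    slopeLT d r v c x y := by
  rw [slopeLE_iff_slopeGap_nonpos, slopeGap_add] at hplus
  rw [slopeLT_iff_slopeGap_neg, slopeGap_sub] at hminus
  rw [slopeLT_iff_slopeGap_neg]
  -- `ε' * hplus + ε * hminus` reads `(ε + ε') * slopeGap c x y < 0`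
  nlinarith

lemma framingGap_nonpos_of_slopeLE_add {ε : ℝ} (hε : 0 < ε) (h : slopeLE d r v (c + ε) x y)
    (h₀ : slopeGap d r v c x y = 0) : framingGap r v x y ≤ 0 := by
  rw [slopeLE_iff_slopeGap_nonpos, slopeGap_add, h₀, zero_add] at h
  exact nonpos_of_mul_nonpos_right h hε

lemma framingGap_neg_of_slopeLT_add {ε : ℝ} (hε : 0 < ε) (h : slopeLT d r v (c + ε) x y)
    (h₀ : slopeGap d r v c x y = 0) : framingGap r v x y < 0 := by
  rw [slopeLT_iff_slopeGap_neg, slopeGap_add, h₀, zero_add] at h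
  exact neg_of_mul_neg_right h hε.le

lemma framingGap_pos_of_slopeLT_sub {ε : ℝ} (hε : 0 < ε) (h : slopeLT d r v (c - ε) x y)
    (h₀ : slopeGap d r v c x y = 0) : 0 < framingGap r v x y := by
  rw [slopeLT_iff_slopeGap_neg, slopeGap_sub, h₀, zero_sub, neg_lt_zero] at h
  exact pos_of_mul_pos_right h hε.le

lemma slopeLE_of_slopeLT (h : slopeLT d r v c x y) : slopeLE d r v c x y :=
  le_of_lt h

lemma slopeGap_self_add_neg (hvy : v y = 0) (hry : r y = 0) (hdy : 0 < d y) (hrx : 0 < r x) :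
    slopeGap d r v c x (x + y) < 0 := by
  rw [slopeGap_self_add_right]
  simp only [slopeGap, hvy, hry, Int.cast_zero, mul_zero, add_zero, zero_sub, neg_neg_iff_pos]
  exact mul_pos hdy hrx

lemma framing_eq_one_of_framingGap_pos (hz : v z = 1) (hx₀ : 0 ≤ v x) (hx₁ : v x ≤ 1)
    (hr : 0 ≤ r x) (h : 0 < framingGap r v x z) : v x = 1 := by
  by_contra hne
  have hx : v x = 0 := by omega
  simp only [framingGap, hx, hz, Int.cast_zero, Int.cast_one, zero_mul, one_mul] at h
  linarith

end SlopeGap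

section Subobjects

variable {C : Type*} [Category C] {Γ : Type*} [AddCommGroup Γ] {cl : C → Γ}
  {d r : Γ →+ ℝ} {v : Γ →+ ℤ} {c δ : ℝ}

lemma rank_pos_of_framing_ne_zero
    (hpos : ∀ X : C, ¬ IsZero X →
      0 ≤ r (cl X) ∧ 0 ≤ v (cl X) ∧ (r (cl X) = 0 → 0 < d (cl X) ∧ v (cl X) = 0))
    {X : C} (hX : ¬IsZero X) (hv : v (cl X) ≠ 0) : 0 < r (cl X) :=
  (hpos X hX).1.lt_of_ne fun h => hv ((hpos X hX).2.2 h.symm).2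

variable [Abelian C]

lemma not_isZero_cokernel_of_not_isIso {X Y : C} (f : X ⟶ Y) [Mono f] (hf : ¬IsIso f) :
    ¬IsZero (cokernel f) := fun h =>
  hf (have := Preadditive.epi_of_isZero_cokernel f h; isIso_of_mono_of_epi f)

lemma not_isIso_comp_of_not_isIso {X Y Z : C} (g : X ⟶ Y) (f : Y ⟶ Z) [Mono f]
    (hg : ¬IsIso g) : ¬IsIso (g ≫ f) := by
  intro h
  have : Epi f := epi_of_epi g f
  have : IsIso f := isIso_of_mono_of_epi f
  exact hg (IsIso.of_isIso_comp_right g f)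

lemma cl_eq_add_cl_cokernel
    (hses : ∀ S : ShortComplex C, S.ShortExact → cl S.X₂ = cl S.X₁ + cl S.X₃)
    {X Y : C} (f : X ⟶ Y) [Mono f] : cl Y = cl X + cl (cokernel f) :=
  hses _ { exact := ShortComplex.exact_cokernel f }

lemma slopeGap_eq_zero_and_framing_eq_one_of_destabilizing
    (hses : ∀ S : ShortComplex C, S.ShortExact → cl S.X₂ = cl S.X₁ + cl S.X₃)
    (hpos : ∀ X : C, ¬ IsZero X →
      0 ≤ r (cl X) ∧ 0 ≤ v (cl X) ∧ (r (cl X) = 0 → 0 < d (cl X) ∧ v (cl X) = 0))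
    {E E'' : C} (f : E'' ⟶ E) [Mono f] (hf : ¬IsIso f) (hE'' : ¬IsZero E'')
    (hvE : v (cl E) = 1) (hsst : slopeLE d r v c (cl E'') (cl E)) (hδ : 0 < δ)
    (hdestab : ∀ ε : ℝ, 0 < ε → ε < δ → slopeLT d r v (c + ε) (cl (cokernel f)) (cl E'')) :
    slopeGap d r v c (cl E'') (cl E) = 0 ∧ v (cl E'') = 1 := by
  have hclE := cl_eq_add_cl_cokernel hses f
  have hdestabE : ∀ ε : ℝ, 0 < ε → ε < δ → slopeLT d r v (c + ε) (cl E) (cl E'') := by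
    intro ε h₁ h₂
    rw [slopeLT_iff_slopeGap_neg, hclE, slopeGap_add_left_self, ← slopeLT_iff_slopeGap_neg]
    exact hdestab ε h₁ h₂
  have hgap : slopeGap d r v c (cl E) (cl E'') = 0 := by
    refine le_antisymm (slopeLE_iff_slopeGap_nonpos.mp (slopeLE_of_forall_slopeLE_add hδ
      fun ε h₁ h₂ => slopeLE_of_slopeLT (hdestabE ε h₁ h₂))) ?_
    rw [slopeGap_swap, neg_nonneg, ← slopeLE_iff_slopeGap_nonpos]
    exact hsst
  have hframing : 0 < framingGap r v (cl E'') (cl E) := by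
    rw [framingGap_swap, neg_pos]
    exact framingGap_neg_of_slopeLT_add (half_pos hδ)
      (hdestabE _ (half_pos hδ) (half_lt_self hδ)) hgap
  have hvE''_le : v (cl E'') ≤ 1 := by
    have := (hpos _ (not_isZero_cokernel_of_not_isIso f hf)).2.1
    rw [hclE, map_add] at hvE
    omega
  refine ⟨by rw [slopeGap_swap, hgap, neg_zero], ?_⟩
  exact framing_eq_one_of_framingGap_pos hvE (hpos E'' hE'').2.1 hvE''_le (hpos E'' hE'').1
    hframing

lemma slopeLT_of_mono_of_framing_eq_one
    (hses : ∀ S : ShortComplex C, S.ShortExact → cl S.X₂ = cl S.X₁ + cl S.X₃)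
    (hpos : ∀ X : C, ¬ IsZero X →
      0 ≤ r (cl X) ∧ 0 ≤ v (cl X) ∧ (r (cl X) = 0 → 0 < d (cl X) ∧ v (cl X) = 0))
    {E E'' F : C} (g : F ⟶ E'') [Mono g] (hg : ¬IsIso g) (hF : ¬IsZero F) (hE'' : ¬IsZero E'')
    (hvE : v (cl E) = 1) (hvE'' : v (cl E'') = 1)
    (hE''E : slopeGap d r v c (cl E'') (cl E) = 0) (hδ : 0 < δ)
    (hss : ∀ ε : ℝ, 0 < ε → ε < δ → slopeLE d r v (c + ε) (cl F) (cl E''))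
    {ε' : ℝ} (hε' : 0 < ε') (hFE : slopeLT d r v (c - ε') (cl F) (cl E)) :
    slopeLT d r v c (cl F) (cl E'') := by
  have hG := not_isZero_cokernel_of_not_isIso g hg
  have hclE'' := cl_eq_add_cl_cokernel hses g
  rw [slopeLT_iff_slopeGap_neg]
  by_contra hnonneg
  have hFE'' : slopeGap d r v c (cl F) (cl E'') = 0 :=
    le_antisymm (slopeLE_iff_slopeGap_nonpos.mp (slopeLE_of_forall_slopeLE_add hδ hss))
      (not_lt.mp hnonneg)
  have hrE'' := rank_pos_of_framing_ne_zero hpos hE'' (by rw [hvE'']; exact one_ne_zero)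
  have hvF : v (cl F) = 1 := by
    have hvF_le : v (cl F) ≤ 1 := by
      have := (hpos _ hG).2.1
      rw [hclE'', map_add] at hvE''
      omega
    exact framing_eq_one_of_framingGap_pos hvE (hpos F hF).2.1 hvF_le (hpos F hF).1
      (framingGap_pos_of_slopeLT_sub hε' hFE (slopeGap_eq_zero_trans hrE''.ne' hFE'' hE''E))
  have hvG : v (cl (cokernel g)) = 0 := by
    rw [hclE'', map_add, hvF] at hvE''
    omega
  have hrG : r (cl (cokernel g)) = 0 := by
    have hframing := framingGap_nonpos_of_slopeLE_add (half_pos hδ)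
      (hss _ (half_pos hδ) (half_lt_self hδ)) hFE''
    simp only [framingGap, hclE'', map_add, hvF, hvG, add_zero, Int.cast_one, one_mul] at hframing
    linarith [(hpos _ hG).1]
  have hrF := rank_pos_of_framing_ne_zero hpos hF (by rw [hvF]; exact one_ne_zero)
  rw [hclE''] at hFE''
  exact (slopeGap_self_add_neg hvG hrG ((hpos _ hG).2.2 hrG).1 hrF).ne hFE''

end Subobjects

theorem stmt_8_general {C : Type*} [Category C] [Abelian C] {Γ : Type*} [AddCommGroup Γ]
    (cl : C → Γ) (d r : Γ →+ ℝ) (v : Γ →+ ℤ)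
    (hcl0 : ∀ X : C, IsZero X → cl X = 0)
    (hses : ∀ S : ShortComplex C, S.ShortExact → cl S.X₂ = cl S.X₁ + cl S.X₃)
    (hpos : ∀ X : C, ¬ IsZero X →
      0 ≤ r (cl X) ∧ 0 ≤ v (cl X) ∧ (r (cl X) = 0 → 0 < d (cl X) ∧ v (cl X) = 0))
    (E : C) (hvE : v (cl E) = 1) (c : ℝ)
    (hsst : IsSemistableAt cl d r v c E)
    (E'' : C) (f : E'' ⟶ E) (hf : Mono f) (hne : ¬ IsZero E'')
    (hHN : ∃ δ > (0 : ℝ), ∀ ε : ℝ, 0 < ε → ε < δ →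
      ((IsIso f ∧ IsSemistableAt cl d r v (c + ε) E) ∨
       (¬ IsIso f ∧ IsSemistableAt cl d r v (c + ε) E'' ∧
         IsSemistableAt cl d r v (c + ε) (cokernel f) ∧
         slopeLT d r v (c + ε) (cl (cokernel f)) (cl E''))))
    (hminus : IsMinusStableAt cl d r v c E) :
    IsStableAt cl d r v c E'' := by
  intro F g hg hF hg_iso
  obtain ⟨δ, hδ, hHN⟩ := hHN
  obtain ⟨δ', hδ', hminus⟩ := hminus
  have hgf_iso := not_isIso_comp_of_not_isIso g f hg_iso
  have hFE : slopeLT d r v (c - δ' / 2) (cl F) (cl E) :=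
    hminus _ (half_pos hδ') (half_lt_self hδ') F (g ≫ f) inferInstance hF hgf_iso
  by_cases hf_iso : IsIso f
  · have hcl : cl E'' = cl E := by
      rw [cl_eq_add_cl_cokernel hses f, hcl0 _ (isZero_cokernel_of_epi f), add_zero]
    have hFE_plus : slopeLE d r v (c + δ / 2) (cl F) (cl E) := by
      obtain ⟨-, hss⟩ | ⟨hn, -⟩ := hHN _ (half_pos hδ) (half_lt_self hδ)
      exacts [hss F (g ≫ f) inferInstance hF hgf_iso, absurd hf_iso hn]
    rw [hcl]
    exact slopeLT_of_slopeLE_add_of_slopeLT_sub (half_pos hδ) (half_pos hδ') hFE_plus hFE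
  · have hHN' : ∀ ε : ℝ, 0 < ε → ε < δ → IsSemistableAt cl d r v (c + ε) E'' ∧
        slopeLT d r v (c + ε) (cl (cokernel f)) (cl E'') := fun ε h₁ h₂ => by
      obtain ⟨hi, -⟩ | ⟨-, hss, -, hlt⟩ := hHN ε h₁ h₂
      exacts [absurd hi hf_iso, ⟨hss, hlt⟩]
    obtain ⟨hE''E, hvE''⟩ := slopeGap_eq_zero_and_framing_eq_one_of_destabilizing hses hpos f
      hf_iso hne hvE (hsst E'' f hf hne hf_iso) hδ fun ε h₁ h₂ => (hHN' ε h₁ h₂).2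
    exact slopeLT_of_mono_of_framing_eq_one hses hpos g hg_iso hF hne hvE hvE'' hE''E hδ
      (fun ε h₁ h₂ => (hHN' ε h₁ h₂).1 F g hg hF hg_iso) (half_pos hδ') hFE

/-- Let `E` be a nonzero `c`-semistable object with `v(cl E) = 1` and let `0 ≠ E'' ⊆ E` be
such that `0 ⊆ E'' ⊆ E` is the `(c+ε)`-HN filtration of `E` for all small `ε > 0`. If `E` is
`c⁻`-stable then the subobject `E''` is `c`-stable. -/
theorem stmt_8 {C : Type*} [Category C] [Abelian C] {Γ : Type*} [AddCommGroup Γ]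
    (cl : C → Γ) (d r : Γ →+ ℝ) (v : Γ →+ ℤ)
    (hcl0 : ∀ X : C, IsZero X → cl X = 0)
    (hses : ∀ S : ShortComplex C, S.ShortExact → cl S.X₂ = cl S.X₁ + cl S.X₃)
    (hpos : ∀ X : C, ¬ IsZero X →
      0 ≤ r (cl X) ∧ 0 ≤ v (cl X) ∧ (r (cl X) = 0 → 0 < d (cl X) ∧ v (cl X) = 0))
    (E : C) (hE : ¬ IsZero E) (hvE : v (cl E) = 1) (c : ℝ)
    (hsst : IsSemistableAt cl d r v c E)
    (hfin : {g : Γ | ∃ (F : C) (f : F ⟶ E), Mono f ∧ cl F = g}.Finite)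
    (E'' : C) (f : E'' ⟶ E) (hf : Mono f) (hne : ¬ IsZero E'')
    (hHN : ∃ δ > (0 : ℝ), ∀ ε : ℝ, 0 < ε → ε < δ →
      ((IsIso f ∧ IsSemistableAt cl d r v (c + ε) E) ∨
       (¬ IsIso f ∧ IsSemistableAt cl d r v (c + ε) E'' ∧
         IsSemistableAt cl d r v (c + ε) (cokernel f) ∧
         slopeLT d r v (c + ε) (cl (cokernel f)) (cl E''))))
    (hminus : IsMinusStableAt cl d r v c E) :
    IsStableAt cl d r v c E'' :=
  stmt_8_general cl d r v hcl0 hses hpos E hvE c hsst E'' f hf hne hHN hminus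
end

section
/- Assume in addition that r(cl F) > 0 for every nonzero object F of 𝒜. Let E be a nonzero object with v(cl E) = 1, and assume the set {cl F : F a subobject of E} ⊆ Γ is finite. Then E is +∞-stable if and only if every subobject F of E with F ≠ 0 and F ≠ E satisfies v(cl F) = 0. -/
open CategoryTheory CategoryTheory.Limits

/-- `E` is `+∞`-stable if it is `c`-stable for all sufficiently large `c`. -/
def IsPlusInftyStable {C : Type*} [Category C] [Abelian C] {Γ : Type*} [AddCommGroup Γ]
    (cl : C → Γ) (d r : Γ →+ ℝ) (v : Γ →+ ℤ) (E : C) : Prop :=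
  ∃ c₀ : ℝ, ∀ c : ℝ, c₀ < c → IsStableAt cl d r v c E

/-- `E` is `−∞`-stable if it is `c`-stable for all sufficiently small `c`. -/
def IsMinusInftyStable {C : Type*} [Category C] [Abelian C] {Γ : Type*} [AddCommGroup Γ]
    (cl : C → Γ) (d r : Γ →+ ℝ) (v : Γ →+ ℤ) (E : C) : Prop :=
  ∃ c₀ : ℝ, ∀ c : ℝ, c < c₀ → IsStableAt cl d r v c E

lemma aux_ses {C : Type*} [Category C] [Abelian C] {Γ : Type*} [AddCommGroup Γ]
    (cl : C → Γ)
    (hses : ∀ S : ShortComplex C, S.ShortExact → cl S.X₂ = cl S.X₁ + cl S.X₃)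
    {F E : C} (f : F ⟶ E) (hf : Mono f) (hni : ¬ IsIso f) :
    cl E = cl F + cl (cokernel f) ∧ ¬ IsZero (cokernel f) := by
  haveI := hf
  have hS : (ShortComplex.mk f (cokernel.π f) (cokernel.condition f)).ShortExact :=
    { exact := (ShortComplex.mk f (cokernel.π f) (cokernel.condition f)).exact_of_g_is_cokernel
        (cokernelIsCokernel f)
      mono_f := hf
      epi_g := coequalizer.π_epi }
  constructor
  · exact hses _ hS
  · intro hz
    haveI := Preadditive.epi_of_isZero_cokernel f hz
    exact hni (isIso_of_mono_of_epi f)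

/-- Assume `r(cl F) > 0` for every nonzero object `F`. Then a nonzero object `E` with
`v(cl E) = 1` (with finitely many classes of subobjects) is `+∞`-stable iff every subobject
`F ⊆ E` with `F ≠ 0`, `F ≠ E` satisfies `v(cl F) = 0`. -/
theorem stmt_9 {C : Type*} [Category C] [Abelian C] {Γ : Type*} [AddCommGroup Γ]
    (cl : C → Γ) (d r : Γ →+ ℝ) (v : Γ →+ ℤ)
    (hcl0 : ∀ X : C, IsZero X → cl X = 0)
    (hses : ∀ S : ShortComplex C, S.ShortExact → cl S.X₂ = cl S.X₁ + cl S.X₃)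
    (hpos : ∀ X : C, ¬ IsZero X →
      0 ≤ r (cl X) ∧ 0 ≤ v (cl X) ∧ (r (cl X) = 0 → 0 < d (cl X) ∧ v (cl X) = 0))
    (hrpos : ∀ X : C, ¬ IsZero X → 0 < r (cl X))
    (E : C) (hE : ¬ IsZero E) (hvE : v (cl E) = 1)
    (hfin : {g : Γ | ∃ (F : C) (f : F ⟶ E), Mono f ∧ cl F = g}.Finite) :
    IsPlusInftyStable cl d r v E ↔
      ∀ (F : C) (f : F ⟶ E), Mono f → ¬ IsZero F → ¬ IsIso f → v (cl F) = 0 := by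
  constructor
  · rintro ⟨c₀, hc₀⟩ F f hf hFnz hni
    obtain ⟨hclE, hGnz⟩ := aux_ses cl hses f hf hni
    set G := cokernel f
    have hrF : 0 < r (cl F) := hrpos F hFnz
    have hrG : 0 < r (cl G) := hrpos G hGnz
    have hrE : r (cl E) = r (cl F) + r (cl G) := by rw [hclE, map_add]
    have hvG : 0 ≤ v (cl G) := (hpos G hGnz).2.1
    have hvF : 0 ≤ v (cl F) := (hpos F hFnz).2.1
    have hvsum : v (cl F) + v (cl G) = 1 := by rw [← map_add, ← hclE, hvE]
    by_contra hne
    have hvF1 : (1 : ℤ) ≤ v (cl F) := lt_of_le_of_ne hvF (Ne.symm hne)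
    set c : ℝ := max (c₀ + 1)
      (max 0 ((d (cl E) * r (cl F) - d (cl F) * r (cl E)) / r (cl G))) with hc
    have hcgt : c₀ < c := lt_of_lt_of_le (lt_add_one c₀) (le_max_left _ _)
    have hc0 : 0 ≤ c := le_trans (le_max_left _ _) (le_max_right _ _)
    have hcb : (d (cl E) * r (cl F) - d (cl F) * r (cl E)) / r (cl G) ≤ c :=
      le_trans (le_max_right _ _) (le_max_right _ _)
    have hcb' : d (cl E) * r (cl F) - d (cl F) * r (cl E) ≤ c * r (cl G) :=
      (div_le_iff₀ hrG).mp hcb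
    have hst := hc₀ c hcgt F f hf hFnz hni
    unfold IsStableAt slopeLT at hst
    rw [hvE] at hst
    have hvF1' : (1 : ℝ) ≤ (v (cl F) : ℝ) := by exact_mod_cast hvF1
    have hrEpos : 0 < r (cl E) := hrpos E hE
    push_cast at hst
    have h1 : c * r (cl E) ≤ c * (v (cl F) : ℝ) * r (cl E) := by
      have h := mul_le_mul_of_nonneg_right (mul_le_mul_of_nonneg_left hvF1' hc0) hrEpos.le
      linarith [h]
    have h2 : c * r (cl E) = c * r (cl F) + c * r (cl G) := by rw [hrE]; ring
    nlinarith [h1, h2, hcb', hst]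
  · intro h
    obtain ⟨c₀, hc₀⟩ := ((hfin.image
      (fun g => (d g * r (cl E) - d (cl E) * r g) / r g)).bddAbove)
    refine ⟨c₀, fun c hc F f hf hFnz hni => ?_⟩
    have hrF : 0 < r (cl F) := hrpos F hFnz
    have hv0 : v (cl F) = 0 := h F f hf hFnz hni
    have hmem : (d (cl F) * r (cl E) - d (cl E) * r (cl F)) / r (cl F) ≤ c₀ :=
      hc₀ ⟨cl F, ⟨F, f, hf, rfl⟩, rfl⟩
    have hb : d (cl F) * r (cl E) - d (cl E) * r (cl F) ≤ c₀ * r (cl F) :=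
      (div_le_iff₀ hrF).mp hmem
    unfold slopeLT
    rw [hvE, hv0]
    have : c₀ * r (cl F) < c * r (cl F) := by
      exact mul_lt_mul_of_pos_right hc hrF
    push_cast
    nlinarith
end

section
/- Assume in addition that r(cl F) > 0 for every nonzero object F of 𝒜. Let E be a nonzero object with v(cl E) = 1, and assume the set {cl F : F a subobject of E} ⊆ Γ is finite. Then E is −∞-stable if and only if every subobject F of E with F ≠ 0 and F ≠ E satisfies v(cl F) = 1. -/
open CategoryTheory CategoryTheory.Limits

private lemma stmt10_aux {C : Type*} [Category C] [Abelian C] {Γ : Type*} [AddCommGroup Γ]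
    (cl : C → Γ) (hses : ∀ S : ShortComplex C, S.ShortExact → cl S.X₂ = cl S.X₁ + cl S.X₃)
    {F E : C} (f : F ⟶ E) (hm : Mono f) (hni : ¬ IsIso f) :
    ¬ IsZero (cokernel f) ∧ cl E = cl F + cl (cokernel f) := by
  haveI := hm
  constructor
  · intro h
    exact hni (have : Epi f := Abelian.epi_of_cokernel_π_eq_zero f (h.eq_zero_of_tgt _)
      isIso_of_mono_of_epi f)
  · exact hses (ShortComplex.mk f (cokernel.π f) (cokernel.condition f))
      ⟨(ShortComplex.mk f (cokernel.π f) (cokernel.condition f)).exact_of_g_is_cokernel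
        (cokernelIsCokernel f)⟩

/-- Assume `r(cl F) > 0` for every nonzero object `F`. Then a nonzero object `E` with
`v(cl E) = 1` (with finitely many classes of subobjects) is `−∞`-stable iff every subobject
`F ⊆ E` with `F ≠ 0`, `F ≠ E` satisfies `v(cl F) = 1`. -/
theorem stmt_10 {C : Type*} [Category C] [Abelian C] {Γ : Type*} [AddCommGroup Γ]
    (cl : C → Γ) (d r : Γ →+ ℝ) (v : Γ →+ ℤ)
    (hcl0 : ∀ X : C, IsZero X → cl X = 0)
    (hses : ∀ S : ShortComplex C, S.ShortExact → cl S.X₂ = cl S.X₁ + cl S.X₃)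
    (hpos : ∀ X : C, ¬ IsZero X →
      0 ≤ r (cl X) ∧ 0 ≤ v (cl X) ∧ (r (cl X) = 0 → 0 < d (cl X) ∧ v (cl X) = 0))
    (hrpos : ∀ X : C, ¬ IsZero X → 0 < r (cl X))
    (E : C) (hE : ¬ IsZero E) (hvE : v (cl E) = 1)
    (hfin : {g : Γ | ∃ (F : C) (f : F ⟶ E), Mono f ∧ cl F = g}.Finite) :
    IsMinusInftyStable cl d r v E ↔
      ∀ (F : C) (f : F ⟶ E), Mono f → ¬ IsZero F → ¬ IsIso f → v (cl F) = 1 := by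
  constructor
  · -- forward
    rintro ⟨c₀, hst⟩ F f hm hF hni
    obtain ⟨hcoker, hclE⟩ := stmt10_aux cl hses f hm hni
    have hrF : 0 < r (cl F) := hrpos F hF
    have hvF : 0 ≤ v (cl F) := (hpos F hF).2.1
    have hvG : 0 ≤ v (cl (cokernel f)) := (hpos _ hcoker).2.1
    have hsum : v (cl F) + v (cl (cokernel f)) = 1 := by
      rw [← map_add, ← hclE, hvE]
    have hle1 : v (cl F) ≤ 1 := by omega
    by_contra hne
    have hv0 : v (cl F) = 0 := by omega
    set c : ℝ := min (c₀ - 1) ((d (cl F) * r (cl E) - d (cl E) * r (cl F)) / r (cl F)) with hc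
    have hcc : c < c₀ := lt_of_le_of_lt (min_le_left _ _) (by linarith)
    have hst' := hst c hcc F f hm hF hni
    unfold slopeLT at hst'
    rw [hv0] at hst'
    have hcle : c ≤ (d (cl F) * r (cl E) - d (cl E) * r (cl F)) / r (cl F) := min_le_right _ _
    rw [le_div_iff₀ hrF] at hcle
    rw [hvE] at hst'
    push_cast at hst'
    nlinarith
  · -- backward
    intro hv
    have hne : hfin.toFinset.Nonempty := ⟨cl E, by
      simp only [Set.Finite.mem_toFinset]
      exact ⟨E, 𝟙 E, inferInstance, rfl⟩⟩
    set t : Γ → ℝ := fun g => (d (cl E) * r g - d g * r (cl E)) / (r (cl E) - r g) with ht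
    refine ⟨hfin.toFinset.inf' hne t, fun c hc F f hm hF hni => ?_⟩
    obtain ⟨hcoker, hclE⟩ := stmt10_aux cl hses f hm hni
    have hrF : 0 < r (cl F) := hrpos F hF
    have hrG : 0 < r (cl (cokernel f)) := hrpos _ hcoker
    have hrlt : r (cl F) < r (cl E) := by
      have : r (cl E) = r (cl F) + r (cl (cokernel f)) := by rw [hclE, map_add]
      linarith
    have hmem : cl F ∈ hfin.toFinset := by
      simp only [Set.Finite.mem_toFinset]
      exact ⟨F, f, hm, rfl⟩
    have hct : c < t (cl F) := lt_of_lt_of_le hc (Finset.inf'_le t hmem)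
    have hpos' : 0 < r (cl E) - r (cl F) := by linarith
    rw [ht] at hct
    have : c * (r (cl E) - r (cl F)) < d (cl E) * r (cl F) - d (cl F) * r (cl E) := by
      rw [← lt_div_iff₀ hpos']
      simpa using hct
    unfold slopeLT
    rw [hv F f hm hF hni, hvE]
    push_cast
    nlinarith
end

section
/- Let S = {(a,b) ∈ ℤ² : a > 0} ∪ {(0,b) ∈ ℤ² : b ≥ 0}. Then S is not finitely generated as an additive monoid: there is no finite subset T ⊆ S such that every element of S is a finite sum of elements of T. -/
/-- The semigroup `S = (ℤ_{>0} × ℤ) ∪ ({0} × ℤ_{≥0}) ⊆ ℤ²`. -/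
def Scone : Set (ℤ × ℤ) := {p | 0 < p.1 ∨ (p.1 = 0 ∧ 0 ≤ p.2)}

/-- `Scone` is not finitely generated as an additive monoid: no finite subset `T ⊆ S`
has the property that every element of `S` is a finite sum of elements of `T`
(i.e. lies in the additive submonoid generated by `T`). -/
theorem stmt_14 :
    ¬ ∃ T : Finset (ℤ × ℤ), (T : Set (ℤ × ℤ)) ⊆ Scone ∧
      ∀ s ∈ Scone, s ∈ AddSubmonoid.closure (T : Set (ℤ × ℤ)) := by
  rintro ⟨T, hTS, hgen⟩
  set B : ℤ := -(∑ t ∈ T, |t.2|) with hBdef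
  have hsum : 0 ≤ ∑ t ∈ T, |t.2| := Finset.sum_nonneg fun i _ => abs_nonneg _
  have hB0 : B ≤ 0 := by simp [hBdef]; linarith
  have hBt : ∀ t ∈ T, B ≤ t.2 := by
    intro t ht
    have h1 := Finset.single_le_sum (f := fun t : ℤ × ℤ => |t.2|)
      (fun i _ => abs_nonneg _) ht
    have h2 := neg_abs_le t.2
    simp [hBdef]; linarith
  set K : AddSubmonoid (ℤ × ℤ) :=
    { carrier := {p | B * p.1 ≤ p.2}
      zero_mem' := by simp
      add_mem' := by
        intro a b ha hb
        simp only [Set.mem_setOf_eq, Prod.fst_add, Prod.snd_add] at *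
        rw [mul_add]; linarith } with hK
  have hsub : AddSubmonoid.closure (T : Set (ℤ × ℤ)) ≤ K := by
    apply AddSubmonoid.closure_le.2
    intro t ht
    have hts := hTS ht
    have hBle := hBt t ht
    change B * t.1 ≤ t.2
    rcases hts with h | ⟨h0, h2⟩
    · have h1le : 1 ≤ t.1 := h
      nlinarith
    · simp [h0]; linarith
  have hmem : ((1 : ℤ), B - 1) ∈ Scone := Or.inl one_pos
  have := hsub (hgen _ hmem)
  change B * 1 ≤ B - 1 at this
  linarith
end

section
/- (Wall-crossing formula, symmetric case.) Let e = (0,…,0,1) ∈ ℕ^{n+1}, x_* = x^e, and ν = ⟨−, e⟩ : ℤ^{n+1} → ℤ. Assume ⟨α,β⟩ = 0 whenever the last coordinates of α and β are both zero (so the unframed elements form a commutative subalgebra T̂⁰ of T̂). Suppose A, A⁻, A⁺, B ∈ T̂ are unframed, B(0) is a unit of R (so B is invertible in T̂⁰), and M_e(A) = B ∘ M_e(A⁻) and M_e(A) = M_e(A⁺) ∘ B. Then A⁺ = C ∘ A⁻, where C = S_ν(B) ∘ (S_{−ν}(B))^{−1}; moreover C = S_{−ν}(S_{2ν}(B) ∘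 B^{−1}). -/
/-!
Write `M_e f` as a twisted product with `x^e` on either side: `M_e f = S_{-ν}(f) ∘ x^e =
x^e ∘ S_ν(f)`. Since `M_e` is injective, the two hypotheses become `A = S_ν(B) ∘ A⁻` and
`A = A⁺ ∘ S_{-ν}(B)`; multiplying on the right by `(S_{-ν} B)⁻¹` and commuting it past the
unframed `A⁻` gives `A⁺ = C ∘ A⁻`. The second formula for `C` holds because `S_{-ν}` is
multiplicative and sends `B⁻¹` to `(S_{-ν} B)⁻¹`. Unframed series commute because the twist
vanishes on them.
A series with unit constant term has a right inverse, built degree by degree; left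
multiplication by an unframed series commutes with truncation to the unframed part, so that
truncation is an unframed right inverse, hence a two-sided one by commutativity.
-/

open Finset

/-- Coercion of an exponent vector `ℕ^k → ℤ^k`. -/
def coeZ {k : ℕ} (α : Fin k → ℕ) : Fin k → ℤ := fun i => (α i : ℤ)

/-- Multiplication of the completed quantum torus `T̂`: for functions
`f g : ℕ^k → R`, `(f ∘ g)(γ) = Σ_{α+β=γ} u^{⟨α,β⟩} f(α) g(β)`. -/
noncomputable def qmul {R : Type*} [CommRing R] {k : ℕ}
    (B : (Fin k → ℤ) →+ (Fin k → ℤ) →+ ℤ) (u : Rˣ)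
    (f g : (Fin k → ℕ) → R) : (Fin k → ℕ) → R :=
  fun γ => ∑ α ∈ Finset.Iic γ,
    ((u ^ (B (coeZ α) (coeZ (γ - α))) : Rˣ) : R) * f α * g (γ - α)

/-- The basis element `x^α ∈ T̂`: the indicator function of `α`. -/
def xpow {R : Type*} [CommRing R] {k : ℕ} (α : Fin k → ℕ) : (Fin k → ℕ) → R :=
  fun γ => if γ = α then 1 else 0

/-- The twist operator `S_λ : T̂ → T̂`, `(S_λ f)(α) = u^{λ(α)}·f(α)`. -/
def Sop {R : Type*} [CommRing R] {k : ℕ} (u : Rˣ) (lam : (Fin k → ℤ) →+ ℤ)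
    (f : (Fin k → ℕ) → R) : (Fin k → ℕ) → R :=
  fun α => ((u ^ (lam (coeZ α)) : Rˣ) : R) * f α

/-- The shift operator `M_β : T̂ → T̂` (untwisted multiplication by `x^β`). -/
noncomputable def Mshift {R : Type*} [CommRing R] {k : ℕ} (β : Fin k → ℕ)
    (f : (Fin k → ℕ) → R) : (Fin k → ℕ) → R :=
  fun γ => open Classical in if β ≤ γ then f (γ - β) else 0

/-- The framing basis vector `e = (0,…,0,1) ∈ ℕ^{n+1}`. -/
def lastE (n : ℕ) : Fin (n + 1) → ℕ := fun i => if i = Fin.last n then 1 else 0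

/-- An element of the completed quantum torus is unframed if it is supported on exponents
whose last coordinate vanishes. -/
def Unframed {R : Type*} [CommRing R] {n : ℕ} (f : (Fin (n + 1) → ℕ) → R) : Prop :=
  ∀ α : Fin (n + 1) → ℕ, α (Fin.last n) ≠ 0 → f α = 0

-- `Fin k → ℕ` has no global antidiagonal; the one cut out of `Iic γ ×ˢ Iic γ` serves.
attribute [local instance] Finset.HasAntidiagonal.antidiagonalOfLocallyFinite

section QuantumTorus

variable {R : Type*} [CommRing R] {k : ℕ} (B : (Fin k → ℤ) →+ (Fin k → ℤ) →+ ℤ) (u : Rˣ)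

lemma coeZ_zero : coeZ (0 : Fin k → ℕ) = 0 := by
  funext i; simp [coeZ]

lemma coeZ_add (α β : Fin k → ℕ) : coeZ (α + β) = coeZ α + coeZ β := by
  funext i; simp [coeZ]

lemma qmul_apply (f g : (Fin k → ℕ) → R) (γ : Fin k → ℕ) :
    qmul B u f g γ = ∑ p ∈ antidiagonal γ,
      ((u ^ B (coeZ p.1) (coeZ p.2) : Rˣ) : R) * f p.1 * g p.2 := by
  refine sum_nbij' (fun α => (α, γ - α)) Prod.fst ?_ ?_ ?_ ?_ ?_
  · intro α hα
    simp [add_tsub_cancel_of_le (mem_Iic.mp hα)]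
  · intro p hp
    exact mem_Iic.mpr (HasAntidiagonal.antidiagonal.fst_le hp)
  · intro α _; rfl
  · intro p hp
    simp [← (HasAntidiagonal.mem_antidiagonal.mp hp)]
  · intro α _; rfl

lemma twist_cocycle (α β γ : Fin k → ℕ) :
    ((u ^ B (coeZ (α + β)) (coeZ γ) : Rˣ) : R) * ((u ^ B (coeZ α) (coeZ β) : Rˣ) : R) =
      ((u ^ B (coeZ α) (coeZ (β + γ)) : Rˣ) : R) * ((u ^ B (coeZ β) (coeZ γ) : Rˣ) : R) := by
  simp only [← Units.val_mul, ← zpow_add, coeZ_add, map_add, AddMonoidHom.add_apply]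
  ring_nf

lemma qmul_assoc (f g h : (Fin k → ℕ) → R) :
    qmul B u (qmul B u f g) h = qmul B u f (qmul B u g h) := by
  funext γ
  simp only [qmul_apply, sum_mul, mul_sum, sum_sigma']
  refine sum_nbij' (fun ⟨⟨_, j⟩, ⟨i, l⟩⟩ ↦ ⟨(i, l + j), (l, j)⟩)
    (fun ⟨⟨i, _⟩, ⟨j, l⟩⟩ ↦ ⟨(i + j, l), (i, j)⟩) ?_ ?_ ?_ ?_ ?_
  · rintro ⟨⟨_, j⟩, ⟨i, l⟩⟩ h
    simp only [mem_sigma, HasAntidiagonal.mem_antidiagonal] at h ⊢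
    obtain ⟨rfl, rfl⟩ := h
    exact ⟨(add_assoc i l j).symm, trivial⟩
  · rintro ⟨⟨i, _⟩, ⟨j, l⟩⟩ h
    simp only [mem_sigma, HasAntidiagonal.mem_antidiagonal] at h ⊢
    obtain ⟨rfl, rfl⟩ := h
    exact ⟨add_assoc i j l, trivial⟩
  · rintro ⟨⟨_, j⟩, ⟨i, l⟩⟩ h
    simp only [mem_sigma, HasAntidiagonal.mem_antidiagonal] at h
    obtain ⟨-, rfl⟩ := h
    rfl
  · rintro ⟨⟨i, _⟩, ⟨j, l⟩⟩ h
    simp only [mem_sigma, HasAntidiagonal.mem_antidiagonal] at h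
    obtain ⟨-, rfl⟩ := h
    rfl
  · rintro ⟨⟨_, j⟩, ⟨i, l⟩⟩ h
    simp only [mem_sigma, HasAntidiagonal.mem_antidiagonal] at h
    obtain ⟨-, rfl⟩ := h
    linear_combination (f i * g l * h j) * twist_cocycle B u i l j

open Classical in
lemma qmul_xpow_apply (f : (Fin k → ℕ) → R) (η γ : Fin k → ℕ) :
    qmul B u f (xpow η) γ =
      if η ≤ γ then ((u ^ B (coeZ (γ - η)) (coeZ η) : Rˣ) : R) * f (γ - η) else 0 := by
  simp only [qmul_apply, xpow, mul_ite, mul_one, mul_zero]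
  have hfilter : {p ∈ antidiagonal γ | p.2 = η} = if η ≤ γ then {(γ - η, η)} else ∅ :=
    HasAntidiagonal.filter_snd_eq_antidiagonal γ η
  rw [← sum_filter, hfilter]
  split_ifs <;> simp

open Classical in
lemma xpow_qmul_apply (f : (Fin k → ℕ) → R) (η γ : Fin k → ℕ) :
    qmul B u (xpow η) f γ =
      if η ≤ γ then ((u ^ B (coeZ η) (coeZ (γ - η)) : Rˣ) : R) * f (γ - η) else 0 := by
  simp only [qmul_apply, xpow, mul_ite, ite_mul, mul_one, mul_zero, zero_mul]
  have hfilter : {p ∈ antidiagonal γ | p.1 = η} = if η ≤ γ then {(η, γ - η)} else ∅ :=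
    HasAntidiagonal.filter_fst_eq_antidiagonal γ η
  rw [← sum_filter, hfilter]
  split_ifs <;> simp

lemma qmul_one (f : (Fin k → ℕ) → R) : qmul B u f (xpow 0) = f := by
  funext γ
  simp [qmul_xpow_apply, coeZ_zero]

lemma one_qmul (f : (Fin k → ℕ) → R) : qmul B u (xpow 0) f = f := by
  funext γ
  simp [xpow_qmul_apply, coeZ_zero]

lemma qmul_left_inv_eq_right_inv {f g h : (Fin k → ℕ) → R}
    (hgf : qmul B u g f = xpow 0) (hfh : qmul B u f h = xpow 0) : g = h := by
  rw [← qmul_one B u g, ← hfh, ← qmul_assoc, hgf, one_qmul]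

lemma Sop_qmul (lam : (Fin k → ℤ) →+ ℤ) (f g : (Fin k → ℕ) → R) :
    Sop u lam (qmul B u f g) = qmul B u (Sop u lam f) (Sop u lam g) := by
  funext γ
  simp only [Sop, qmul_apply, mul_sum]
  refine sum_congr rfl fun p hp => ?_
  rw [← HasAntidiagonal.mem_antidiagonal.mp hp, coeZ_add, map_add, zpow_add, Units.val_mul]
  ring

lemma Sop_Sop (l₁ l₂ : (Fin k → ℤ) →+ ℤ) (f : (Fin k → ℕ) → R) :
    Sop u l₁ (Sop u l₂ f) = Sop u (l₁ + l₂) f := by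
  funext α
  simp only [Sop, AddMonoidHom.add_apply, zpow_add, Units.val_mul, mul_assoc]

lemma Sop_zero (f : (Fin k → ℕ) → R) : Sop u 0 f = f := by
  funext α
  simp [Sop]

lemma Sop_xpow_zero (lam : (Fin k → ℤ) →+ ℤ) : Sop u lam (xpow 0 : (Fin k → ℕ) → R) = xpow 0 := by
  funext γ
  by_cases h : γ = 0 <;> simp [Sop, xpow, h, coeZ_zero]

lemma Mshift_injective (η : Fin k → ℕ) :
    Function.Injective (Mshift η : ((Fin k → ℕ) → R) → (Fin k → ℕ) → R) := by
  intro f g h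
  funext γ
  simpa [Mshift] using congrFun h (γ + η)

lemma Mshift_eq_qmul_xpow (η : Fin k → ℕ) (f : (Fin k → ℕ) → R) :
    Mshift η f = qmul B u (Sop u (-B.flip (coeZ η)) f) (xpow η) := by
  funext γ
  rw [qmul_xpow_apply]
  simp only [Mshift, Sop, AddMonoidHom.neg_apply, AddMonoidHom.flip_apply, ← mul_assoc,
    ← Units.val_mul, ← zpow_add, add_neg_cancel, zpow_zero, Units.val_one, one_mul]

lemma Mshift_eq_xpow_qmul (hskew : ∀ a b : Fin k → ℤ, B a b = - B b a)
    (η : Fin k → ℕ) (f : (Fin k → ℕ) → R) :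
    Mshift η f = qmul B u (xpow η) (Sop u (B.flip (coeZ η)) f) := by
  funext γ
  rw [xpow_qmul_apply]
  simp only [Mshift, Sop, AddMonoidHom.flip_apply, hskew (coeZ η), ← mul_assoc,
    ← Units.val_mul, ← zpow_add, neg_add_cancel, zpow_zero, Units.val_one, one_mul]

lemma qmul_Mshift (η : Fin k → ℕ) (f g : (Fin k → ℕ) → R) :
    qmul B u f (Mshift η g) = Mshift η (qmul B u (Sop u (B.flip (coeZ η)) f) g) := by
  rw [Mshift_eq_qmul_xpow, Mshift_eq_qmul_xpow, Sop_qmul, Sop_Sop, neg_add_cancel, Sop_zero,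
    qmul_assoc]

lemma Mshift_qmul (hskew : ∀ a b : Fin k → ℤ, B a b = - B b a)
    (η : Fin k → ℕ) (f g : (Fin k → ℕ) → R) :
    qmul B u (Mshift η f) g = Mshift η (qmul B u f (Sop u (-B.flip (coeZ η)) g)) := by
  rw [Mshift_eq_xpow_qmul B u hskew, Mshift_eq_xpow_qmul B u hskew, Sop_qmul, Sop_Sop,
    add_neg_cancel, Sop_zero, qmul_assoc]

end QuantumTorus

-- The `(0, γ)` term of `(f ∘ g)(γ) = δ_{γ,0}` determines `g γ` from the lower coefficients.
noncomputable def qmulRightInv {R : Type*} [CommRing R] {k : ℕ}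
    (B : (Fin k → ℤ) →+ (Fin k → ℤ) →+ ℤ) (u : Rˣ) (f : (Fin k → ℕ) → R) (γ : Fin k → ℕ) : R :=
  Ring.inverse (f 0) * (xpow 0 γ - ∑ p ∈ ((antidiagonal γ).erase (0, γ)).attach,
    ((u ^ B (coeZ p.1.1) (coeZ p.1.2) : Rˣ) : R) * f p.1.1 * qmulRightInv B u f p.1.2)
termination_by (Iic γ).card
decreasing_by
  obtain ⟨⟨a, b⟩, hp⟩ := p
  obtain ⟨hne, hab⟩ := mem_erase.mp hp
  rw [HasAntidiagonal.mem_antidiagonal] at hab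
  subst hab
  refine card_lt_card (Iic_ssubset_Iic.mpr (lt_of_le_of_ne le_add_self fun h => hne ?_))
  have ha : a = 0 := by simpa using h
  simp [ha]

section RightInverse

variable {R : Type*} [CommRing R] {k : ℕ} (B : (Fin k → ℤ) →+ (Fin k → ℤ) →+ ℤ) (u : Rˣ)

lemma qmulRightInv_apply (f : (Fin k → ℕ) → R) (γ : Fin k → ℕ) :
    qmulRightInv B u f γ = Ring.inverse (f 0) * (xpow 0 γ - ∑ p ∈ (antidiagonal γ).erase (0, γ),
      ((u ^ B (coeZ p.1) (coeZ p.2) : Rˣ) : R) * f p.1 * qmulRightInv B u f p.2) := by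
  rw [qmulRightInv]
  congr 2
  exact sum_attach _ fun p : (Fin k → ℕ) × (Fin k → ℕ) =>
    ((u ^ B (coeZ p.1) (coeZ p.2) : Rˣ) : R) * f p.1 * qmulRightInv B u f p.2

lemma qmul_qmulRightInv {f : (Fin k → ℕ) → R} (hf : IsUnit (f 0)) :
    qmul B u f (qmulRightInv B u f) = xpow 0 := by
  funext γ
  have h0 : ((0 : Fin k → ℕ), γ) ∈ antidiagonal γ := by simp
  rw [qmul_apply, ← add_sum_erase _ _ h0]
  simp only [coeZ_zero, map_zero, AddMonoidHom.zero_apply, zpow_zero, Units.val_one, one_mul]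
  rw [qmulRightInv_apply, ← mul_assoc, Ring.mul_inverse_cancel _ hf]
  ring

end RightInverse

def unframedPart {R : Type*} [CommRing R] {n : ℕ} (f : (Fin (n + 1) → ℕ) → R) :
    (Fin (n + 1) → ℕ) → R :=
  fun α => if α (Fin.last n) = 0 then f α else 0

def VanishesOnUnframed {n : ℕ} (B : (Fin (n + 1) → ℤ) →+ (Fin (n + 1) → ℤ) →+ ℤ) : Prop :=
  ∀ a b : Fin (n + 1) → ℤ, a (Fin.last n) = 0 → b (Fin.last n) = 0 → B a b = 0

section Unframed

variable {R : Type*} [CommRing R] {n : ℕ} (B : (Fin (n + 1) → ℤ) →+ (Fin (n + 1) → ℤ) →+ ℤ)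
  (u : Rˣ)

lemma unframed_unframedPart (f : (Fin (n + 1) → ℕ) → R) : Unframed (unframedPart f) :=
  fun _ hα => if_neg hα

lemma unframedPart_xpow_zero : unframedPart (xpow 0 : (Fin (n + 1) → ℕ) → R) = xpow 0 := by
  funext α
  by_cases h : α = 0 <;> simp_all [unframedPart, xpow]

lemma Unframed.Sop {f : (Fin (n + 1) → ℕ) → R} (hf : Unframed f) (lam : (Fin (n + 1) → ℤ) →+ ℤ) :
    Unframed (Sop u lam f) :=
  fun α hα => by simp [_root_.Sop, hf α hα]

lemma qmul_unframedPart {f : (Fin (n + 1) → ℕ) → R} (hf : Unframed f) (g : (Fin (n + 1) → ℕ) → R) :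
    qmul B u f (unframedPart g) = unframedPart (qmul B u f g) := by
  funext γ
  simp only [qmul_apply, unframedPart]
  split_ifs with hγ
  · refine sum_congr rfl fun p hp => ?_
    have hlast := congrFun (HasAntidiagonal.mem_antidiagonal.mp hp) (Fin.last n)
    rw [Pi.add_apply] at hlast
    rw [if_pos (by omega)]
  · refine sum_eq_zero fun p hp => ?_
    have hlast := congrFun (HasAntidiagonal.mem_antidiagonal.mp hp) (Fin.last n)
    rw [Pi.add_apply] at hlast
    by_cases h₁ : p.1 (Fin.last n) = 0
    · rw [if_neg (by omega), mul_zero]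
    · rw [hf _ h₁, mul_zero, zero_mul]

lemma qmul_apply_of_unframed
    (hsym : VanishesOnUnframed B)
    {f g : (Fin (n + 1) → ℕ) → R} (hf : Unframed f) (hg : Unframed g) (γ : Fin (n + 1) → ℕ) :
    qmul B u f g γ = ∑ p ∈ antidiagonal γ, f p.1 * g p.2 := by
  rw [qmul_apply]
  refine sum_congr rfl fun p _ => ?_
  by_cases h₁ : p.1 (Fin.last n) = 0
  · by_cases h₂ : p.2 (Fin.last n) = 0
    · simp [hsym (coeZ p.1) (coeZ p.2) (by simp [coeZ, h₁]) (by simp [coeZ, h₂])]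
    · simp [hg _ h₂]
  · simp [hf _ h₁]

lemma qmul_comm_of_unframed
    (hsym : VanishesOnUnframed B)
    {f g : (Fin (n + 1) → ℕ) → R} (hf : Unframed f) (hg : Unframed g) :
    qmul B u f g = qmul B u g f := by
  funext γ
  rw [qmul_apply_of_unframed B u hsym hf hg, qmul_apply_of_unframed B u hsym hg hf]
  exact sum_nbij' Prod.swap Prod.swap (by simp [add_comm]) (by simp [add_comm]) (by simp) (by simp)
    fun _ _ => mul_comm _ _

lemma exists_unframed_inverse
    (hsym : VanishesOnUnframed B)
    {f : (Fin (n + 1) → ℕ) → R} (hf : Unframed f) (hf0 : IsUnit (f 0)) :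
    ∃ D, Unframed D ∧ qmul B u f D = xpow 0 ∧ qmul B u D f = xpow 0 := by
  have hright : qmul B u f (unframedPart (qmulRightInv B u f)) = xpow 0 := by
    rw [qmul_unframedPart B u hf, qmul_qmulRightInv B u hf0, unframedPart_xpow_zero]
  refine ⟨_, unframed_unframedPart _, hright, ?_⟩
  rwa [qmul_comm_of_unframed B u hsym (unframed_unframedPart _) hf]

end Unframed

theorem stmt_18_general {R : Type*} [CommRing R] (n : ℕ)
    (B : (Fin (n + 1) → ℤ) →+ (Fin (n + 1) → ℤ) →+ ℤ)
    (hskew : ∀ a b : Fin (n + 1) → ℤ, B a b = - B b a)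
    (hsym : ∀ a b : Fin (n + 1) → ℤ,
      a (Fin.last n) = 0 → b (Fin.last n) = 0 → B a b = 0)
    (u : Rˣ)
    (A Am Ap Bs : (Fin (n + 1) → ℕ) → R)
    (hAm : Unframed Am) (hBs : Unframed Bs)
    (hB0 : IsUnit (Bs 0))
    (h1 : Mshift (lastE n) A = qmul B u Bs (Mshift (lastE n) Am))
    (h2 : Mshift (lastE n) A = qmul B u (Mshift (lastE n) Ap) Bs) :
    (∃ D : (Fin (n + 1) → ℕ) → R, Unframed D ∧
      qmul B u Bs D = xpow 0 ∧ qmul B u D Bs = xpow 0) ∧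
    (∀ D D' : (Fin (n + 1) → ℕ) → R,
      qmul B u (Sop u (-(B.flip (coeZ (lastE n)))) Bs) D = xpow 0 →
      qmul B u D (Sop u (-(B.flip (coeZ (lastE n)))) Bs) = xpow 0 →
      qmul B u Bs D' = xpow 0 →
      qmul B u D' Bs = xpow 0 →
      Ap = qmul B u (qmul B u (Sop u (B.flip (coeZ (lastE n))) Bs) D) Am ∧
      qmul B u (Sop u (B.flip (coeZ (lastE n))) Bs) D =
        Sop u (-(B.flip (coeZ (lastE n))))
          (qmul B u (Sop u ((2 : ℤ) • (B.flip (coeZ (lastE n)))) Bs) D')) := by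
  refine ⟨exists_unframed_inverse B u hsym hBs hB0, fun D D' hD₁ hD₂ hD'₁ _ => ?_⟩
  set ν := B.flip (coeZ (lastE n))
  have hA_left : A = qmul B u (Sop u ν Bs) Am :=
    Mshift_injective _ (h1.trans (qmul_Mshift B u _ Bs Am))
  have hA_right : A = qmul B u Ap (Sop u (-ν) Bs) :=
    Mshift_injective _ (h2.trans (Mshift_qmul B u hskew _ Ap Bs))
  have hD : Unframed D := by
    have hSBs0 : IsUnit (Sop u (-ν) Bs 0) := by simpa [Sop, coeZ_zero] using hB0
    obtain ⟨E, hE, hSE, -⟩ := exists_unframed_inverse B u hsym (hBs.Sop u (-ν)) hSBs0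
    rwa [qmul_left_inv_eq_right_inv B u hD₂ hSE]
  have hD_eq : D = Sop u (-ν) D' := by
    refine qmul_left_inv_eq_right_inv B u hD₂ ?_
    rw [← Sop_qmul, hD'₁, Sop_xpow_zero]
  constructor
  · calc Ap = qmul B u (qmul B u Ap (Sop u (-ν) Bs)) D := by rw [qmul_assoc, hD₁, qmul_one]
      _ = qmul B u (Sop u ν Bs) (qmul B u Am D) := by rw [← hA_right, hA_left, qmul_assoc]
      _ = qmul B u (qmul B u (Sop u ν Bs) D) Am := by
        rw [qmul_comm_of_unframed B u hsym hAm hD, qmul_assoc]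
  · rw [Sop_qmul, Sop_Sop, ← hD_eq, show -ν + (2 : ℤ) • ν = ν by abel]

/-- Wall-crossing formula, symmetric case: assume the form `⟨−,−⟩` vanishes on unframed
classes (so unframed series commute). If `A, A⁻, A⁺, B` are unframed with `B(0)` a unit
(so `B` is invertible in `T̂⁰`) and `M_e(A) = B ∘ M_e(A⁻)`, `M_e(A) = M_e(A⁺) ∘ B`, then
`A⁺ = C ∘ A⁻` with `C = S_ν(B) ∘ (S_{−ν}(B))^{−1}`, and moreover
`C = S_{−ν}(S_{2ν}(B) ∘ B^{−1})`, where `ν = ⟨−, e⟩`. -/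
theorem stmt_18 {R : Type*} [CommRing R] (n : ℕ) (hn : 1 ≤ n)
    (B : (Fin (n + 1) → ℤ) →+ (Fin (n + 1) → ℤ) →+ ℤ)
    (hskew : ∀ a b : Fin (n + 1) → ℤ, B a b = - B b a)
    (hsym : ∀ a b : Fin (n + 1) → ℤ,
      a (Fin.last n) = 0 → b (Fin.last n) = 0 → B a b = 0)
    (u : Rˣ)
    (A Am Ap Bs : (Fin (n + 1) → ℕ) → R)
    (hA : Unframed A) (hAm : Unframed Am) (hAp : Unframed Ap) (hBs : Unframed Bs)
    (hB0 : IsUnit (Bs 0))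
    (h1 : Mshift (lastE n) A = qmul B u Bs (Mshift (lastE n) Am))
    (h2 : Mshift (lastE n) A = qmul B u (Mshift (lastE n) Ap) Bs) :
    (∃ D : (Fin (n + 1) → ℕ) → R, Unframed D ∧
      qmul B u Bs D = xpow 0 ∧ qmul B u D Bs = xpow 0) ∧
    (∀ D D' : (Fin (n + 1) → ℕ) → R,
      qmul B u (Sop u (-(B.flip (coeZ (lastE n)))) Bs) D = xpow 0 →
      qmul B u D (Sop u (-(B.flip (coeZ (lastE n)))) Bs) = xpow 0 →
      qmul B u Bs D' = xpow 0 →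
      qmul B u D' Bs = xpow 0 →
      Ap = qmul B u (qmul B u (Sop u (B.flip (coeZ (lastE n))) Bs) D) Am ∧
      qmul B u (Sop u (B.flip (coeZ (lastE n))) Bs) D =
        Sop u (-(B.flip (coeZ (lastE n))))
          (qmul B u (Sop u ((2 : ℤ) • (B.flip (coeZ (lastE n)))) Bs) D')) :=
  stmt_18_general n B hskew hsym u A Am Ap Bs hAm hBs hB0 h1 h2
end

section
/- Let P be an additive submonoid of ℤ^m, let d, r : ℤ^m → ℝ be additive group homomorphisms with r(γ) > 0 for every nonzero γ ∈ P, and fix reals d_*, r_* with r_* > 0. For nonzero γ ∈ P set μ(γ) = d(γ)/r(γ), and for γ ∈ P and c ∈ ℝ set μ_c(γ) = (d(γ) + d_* + c)/(r(γ) + r_*). Let c ∈ ℝ, α ∈ P, n ≥ 1, and α₁, …, αₙ ∈ P∖{0} with α − (α₁ + ⋯ + αₙ) ∈ P. For 0 ≤ k ≤ n set α′_k = α − (α₁ + ⋯ + α_k), and for 1 ≤ k ≤ n let c_k be the unique real number satisfying μ(α_k) = μ_{c_k}(α′_k). Then μ_c(α) < μ(α₁) < μ(α₂) < ⋯ < μ(αₙ)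 holds if and only if c < c₁ < c₂ < ⋯ < cₙ. -/
open Finset

private lemma mediant_lt_aux (x p y q : ℝ) (hp : 0 < p) (hq : 0 < q) :
    (x + y) / (p + q) < y / q ↔ x / p < y / q := by
  rw [div_lt_div_iff₀ (by linarith) hq, div_lt_div_iff₀ hp hq]
  constructor <;> intro h <;> nlinarith

private lemma mediant_eq_aux (x p y q : ℝ) (hp : 0 < p) (hq : 0 < q)
    (h : y / q = x / p) : (x + y) / (p + q) = x / p := by
  rw [div_eq_div_iff hq.ne' hp.ne'] at h
  rw [div_eq_div_iff (by positivity : (0:ℝ) < p + q).ne' hp.ne']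
  nlinarith

/-- Correspondence between chains of slopes and chains of wall parameters:
`μ_c(α) < μ(α₁) < ⋯ < μ(αₙ)` holds iff `c < c₁ < ⋯ < cₙ`, where `c_k` is the unique real
with `μ(α_k) = μ_{c_k}(α′_k)`, `α′_k = α − (α₁ + ⋯ + α_k)`. Here `μ(γ) = d(γ)/r(γ)` and
`μ_c(γ) = (d(γ) + d_* + c)/(r(γ) + r_*)` (0-indexed: `α_{k+1} = a k`, `c_{k+1} = cs k`). -/
theorem stmt_19 (m : ℕ) (P : AddSubmonoid (Fin m → ℤ))
    (d r : (Fin m → ℤ) →+ ℝ)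
    (hr : ∀ γ ∈ P, γ ≠ (0 : Fin m → ℤ) → 0 < r γ)
    (dstar rstar : ℝ) (hrstar : 0 < rstar)
    (c : ℝ) (α : Fin m → ℤ) (hα : α ∈ P)
    (n : ℕ) (hn : 1 ≤ n)
    (a : ℕ → (Fin m → ℤ)) (ha : ∀ k < n, a k ∈ P ∧ a k ≠ 0)
    (hrest : α - ∑ i ∈ Finset.range n, a i ∈ P)
    (cs : ℕ → ℝ)
    (hcs : ∀ k < n,
      d (a k) / r (a k) =
        (d (α - ∑ i ∈ Finset.range (k + 1), a i) + dstar + cs k) /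
          (r (α - ∑ i ∈ Finset.range (k + 1), a i) + rstar)) :
    ((d α + dstar + c) / (r α + rstar) < d (a 0) / r (a 0) ∧
        ∀ k : ℕ, k + 1 < n → d (a k) / r (a k) < d (a (k + 1)) / r (a (k + 1))) ↔
      (c < cs 0 ∧ ∀ k : ℕ, k + 1 < n → cs k < cs (k + 1)) := by
  -- α′_k ∈ P for k ≤ n
  have hP : ∀ k ≤ n, α - ∑ i ∈ Finset.range k, a i ∈ P := by
    intro k hk
    have hsum : ∑ i ∈ Finset.range k, a i + ∑ i ∈ Finset.Ico k n, a i
        = ∑ i ∈ Finset.range n, a i := Finset.sum_range_add_sum_Ico a hk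
    have heq : α - ∑ i ∈ Finset.range k, a i
        = (α - ∑ i ∈ Finset.range n, a i) + ∑ i ∈ Finset.Ico k n, a i := by
      rw [← hsum]; abel
    rw [heq]
    exact P.add_mem hrest (AddSubmonoid.sum_mem P (fun i hi => (ha i (Finset.mem_Ico.mp hi).2).1))
  -- r(α′_k) ≥ 0 for k ≤ n
  have hrnn : ∀ k ≤ n, 0 ≤ r (α - ∑ i ∈ Finset.range k, a i) := by
    intro k hk
    rcases eq_or_ne (α - ∑ i ∈ Finset.range k, a i) 0 with h | h
    · rw [h, map_zero]
    · exact le_of_lt (hr _ (hP k hk) h)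
  have hD : ∀ k ≤ n, 0 < r (α - ∑ i ∈ Finset.range k, a i) + rstar := by
    intro k hk; linarith [hrnn k hk]
  have hra : ∀ k < n, 0 < r (a k) := fun k hk => hr _ (ha k hk).1 (ha k hk).2
  have I0 : (d α + dstar + c) / (r α + rstar) < d (a 0) / r (a 0) ↔ c < cs 0 := by
    have h1 : α = (α - ∑ i ∈ Finset.range 1, a i) + a 0 := by
      simp [Finset.sum_range_one]
    have hq := hra 0 hn
    have hp := hD 1 hn
    have hnum : d α + dstar + c
        = (d (α - ∑ i ∈ Finset.range 1, a i) + dstar + c) + d (a 0) := by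
      conv_lhs => rw [h1]
      rw [map_add]; ring
    have hden : r α + rstar
        = (r (α - ∑ i ∈ Finset.range 1, a i) + rstar) + r (a 0) := by
      conv_lhs => rw [h1]
      rw [map_add]; ring
    rw [hnum, hden, mediant_lt_aux _ _ _ _ hp hq, hcs 0 hn,
      div_lt_div_iff_of_pos_right hp]
    constructor <;> intro h <;> linarith
  have Ik : ∀ k : ℕ, k + 1 < n →
      (d (a k) / r (a k) < d (a (k + 1)) / r (a (k + 1)) ↔ cs k < cs (k + 1)) := by
    intro k hk
    have hk1 : k < n := Nat.lt_of_succ_lt hk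
    have hq := hra (k + 1) hk
    have hp := hD (k + 2) hk
    have hp1 := hD (k + 1) hk1
    -- α′_{k+1} = α′_{k+2} + a (k+1)
    have h1 : α - ∑ i ∈ Finset.range (k + 1), a i
        = (α - ∑ i ∈ Finset.range (k + 2), a i) + a (k + 1) := by
      rw [Finset.sum_range_succ (n := k + 1)]; abel
    have hmed : (d (α - ∑ i ∈ Finset.range (k + 1), a i) + dstar + cs (k + 1)) /
        (r (α - ∑ i ∈ Finset.range (k + 1), a i) + rstar)
        = d (a (k + 1)) / r (a (k + 1)) := by
      have hnum : d (α - ∑ i ∈ Finset.range (k + 1), a i) + dstar + cs (k + 1)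
          = (d (α - ∑ i ∈ Finset.range (k + 2), a i) + dstar + cs (k + 1)) + d (a (k + 1)) := by
        conv_lhs => rw [h1]
        rw [map_add]; ring
      have hden : r (α - ∑ i ∈ Finset.range (k + 1), a i) + rstar
          = (r (α - ∑ i ∈ Finset.range (k + 2), a i) + rstar) + r (a (k + 1)) := by
        conv_lhs => rw [h1]
        rw [map_add]; ring
      rw [hnum, hden, mediant_eq_aux _ _ _ _ hp hq (hcs (k + 1) hk)]
      exact (hcs (k + 1) hk).symm
    rw [hcs k hk1, ← hmed, div_lt_div_iff_of_pos_right hp1]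
    constructor <;> intro h <;> linarith
  constructor
  · rintro ⟨h0, hs⟩
    exact ⟨I0.mp h0, fun k hk => (Ik k hk).mp (hs k hk)⟩
  · rintro ⟨h0, hs⟩
    exact ⟨I0.mpr h0, fun k hk => (Ik k hk).mpr (hs k hk)⟩
end
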